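/- The 18 vectors v1,…,v17, v_EH ∈ ℝ^33 listed below are linearly independent, each of them satisfies the 15 gauge-invariance equations (i.e., lies in V), and hence they form a basis of V. -/
import Mathlib


noncomputable section

/-- The 15 first-order gauge-invariance equations on `x = (a1,…,a12,b1,…,b21) ∈ ℝ^33`,
where `a k` is `x (k-1)` and `b j` is `x (j+11)`. -/
def gaugeEqs (x : Fin 33 → ℝ) : Prop :=
    (x 6 - 2 * x 7 - x 8 + x 11 - x 27 + x 28 - x 29 = 0) ∧
    (-2 * x 7 - x 8 - x 9 + x 10 + x 11 + x 25 - x 26 + x 28 - x 29 + x 31 = 0) ∧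
    (-2 * x 7 - x 8 - x 9 + x 10 + x 11 + x 25 + x 28 + x 31 - x 32 = 0) ∧
    (-2 * x 7 - (3/2) * x 8 - (1/2) * x 9 + x 11 + x 24 + x 28 - x 29 = 0) ∧
    (-2 * x 7 - (1/2) * x 8 - (3/2) * x 9 + x 10 + x 25 + x 28 + x 30 + x 31 - x 32 = 0) ∧
    (-x 9 + x 10 + x 25 + x 28 + x 31 - x 32 = 0) ∧
    (-x 3 - x 4 - x 8 - x 9 - x 13 + x 14 - x 15 = 0) ∧
    (-2 * x 2 - 2 * x 5 - x 8 - x 9 - x 10 - x 11 + x 14 - 2 * x 15 + 2 * x 16 - x 17 = 0) ∧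
    (x 4 - x 5 = 0) ∧
    (-x 3 + x 4 - 2 * x 5 - (1/2) * x 8 - (1/2) * x 9 - x 12 - x 15 = 0) ∧
    (-2 * x 1 - x 4 + x 5 - x 7 + x 19 + x 22 = 0) ∧
    (-2 * x 0 + 2 * x 1 - x 3 + 2 * x 4 - 3 * x 5 - x 6 + x 7 - x 19 - 2 * x 21 + x 22 - 2 * x 23 = 0) ∧
    (x 4 - x 5 - x 20 - x 23 = 0) ∧
    (-(1/2) * x 3 + (3/2) * x 4 - 2 * x 5 + x 18 - x 19 - x 23 = 0) ∧
    (-2 * x 1 + x 4 - x 5 - x 7 - x 19 - x 22 = 0)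

def v1 : Fin 33 → ℝ := ![0, 0, -1, -1, 1, 1, 0, 0, 0, 0, 0, 0, 0, 0, 0, 0, 0, 0, 0, 0, 0, 0, 0, 0, 0, 0, 0, 0, 0, 0, 0, 0, 0]

def v2 : Fin 33 → ℝ := ![0, 0, 0, 0, 0, 0, 0, 0, 1, -1, -1, 1, 0, 0, 0, 0, 0, 0, 0, 0, 0, 0, 0, 0, 0, 0, 0, 0, 0, 0, 0, 0, 0]

def v3 : Fin 33 → ℝ := ![0, 0, 0, 0, 0, 0, 0, 0, 0, 0, 0, 0, 0, 1, 1, 0, 0, 1, 0, 0, 0, 0, 0, 0, 0, 0, 0, 0, 0, 0, 0, 0, 0]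

def v4 : Fin 33 → ℝ := ![0, 0, 0, 0, 0, 0, 0, 0, 0, 0, 0, 0, -1, -1, 0, 1, 1, 0, 0, 0, 0, 0, 0, 0, 0, 0, 0, 0, 0, 0, 0, 0, 0]

def v5 : Fin 33 → ℝ := ![0, 0, 0, 0, 0, 0, 0, 0, 0, 0, 0, 0, 0, 0, 0, 0, 1, 2, 0, 0, 0, 0, 0, 0, 0, 0, 0, 0, 0, 0, 0, 0, 0]

def v6 : Fin 33 → ℝ := ![0, 0, 1, 0, 0, 0, 0, 0, 0, 0, 0, 0, 0, 0, 0, 0, 1, 0, 0, 0, 0, 0, 0, 0, 0, 0, 0, 0, 0, 0, 0, 0, 0]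

def v7 : Fin 33 → ℝ := ![0, 0, 0, 0, 0, 0, 0, 0, 0, 0, 0, 0, 0, 0, 0, 0, 0, 0, 1, 1, 0, -1, -1, 0, 0, 0, 0, 0, 0, 0, 0, 0, 0]

def v8 : Fin 33 → ℝ := ![0, 0, 0, 2, 0, 0, 0, 0, 0, 0, 0, 0, -2, -2, 0, 0, 0, 0, 1, 0, 0, -1, 0, 0, 0, 0, 0, 0, 0, 0, 0, 0, 0]

def v9 : Fin 33 → ℝ := ![-1, 0, 0, 0, 0, 0, 0, 0, 0, 0, 0, 0, 0, 0, 0, 0, 0, 0, 0, 0, 0, 1, 0, 0, 0, 0, 0, 0, 0, 0, 0, 0, 0]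

def v10 : Fin 33 → ℝ := ![0, 0, 0, 0, 0, 0, 0, 0, 0, 0, 0, 0, 0, 0, 0, 0, 0, 0, 1, 0, -1, -1, 0, 1, 0, 0, 0, 0, 0, 0, 0, 0, 0]

def v11 : Fin 33 → ℝ := ![0, 0, (-3/2), 0, 0, 0, 0, 0, 1, 1, 1, 1, 0, -2, -1, -1, 0, 0, 0, 0, 0, 0, 0, 0, 1, 0, 0, 0, 0, 0, 1, 0, 0]

def v12 : Fin 33 → ℝ := ![0, 0, 0, 0, 0, 0, 0, 0, 0, 0, 0, 0, 0, 0, 0, 0, 0, 0, 0, 0, 0, 0, 0, 0, 0, 1, 1, 0, 0, 0, 0, 0, 1]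

def v13 : Fin 33 → ℝ := ![0, 0, 0, 0, 0, 0, 0, 0, 0, 0, 0, 0, 0, 0, 0, 0, 0, 0, 0, 0, 0, 0, 0, 0, 0, 1, 0, 0, 0, 0, 0, -1, 0]

def v14 : Fin 33 → ℝ := ![0, 0, (1/2), 0, 0, 0, 0, 0, -1, 1, 0, -1, 0, 0, 0, 0, 0, 0, 0, 0, 0, 0, 0, 0, 0, 0, 0, 0, 0, 0, 0, 1, 0]

def v15 : Fin 33 → ℝ := ![0, 0, 0, 0, 0, 0, 0, 0, 0, 0, 0, 0, 0, 0, 0, 0, 0, 0, 0, 0, 0, 0, 0, 0, -1, 0, 1, 1, 0, -1, 0, 0, 0]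

def v16 : Fin 33 → ℝ := ![(-1/2), 0, 0, 0, 0, 0, 1, 0, 0, 0, 0, 0, 0, 0, 0, 0, 0, 0, 0, 0, 0, 0, 0, 0, 0, 0, 0, 1, 0, 0, 0, 0, 0]

def v17 : Fin 33 → ℝ := ![0, 0, 0, 0, 0, 0, 0, 0, 0, 0, 0, 0, 0, 0, 0, 0, 0, 0, 0, 0, 0, 0, 0, 0, 0, 0, 1, 0, -1, -1, 0, 1, 0]

def vEH : Fin 33 → ℝ := ![0, (-1/4), 0, 0, 0, 0, 0, (1/2), 0, 0, 0, 1, 1, 0, -1, -1, 0, 0, 0, 0, 0, 0, 0, 0, 0, 0, 0, 0, 0, 0, 1, 0, 0]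

/-- The family of the 18 vectors `v1,…,v17, v_EH`. -/
def vFam : Fin 18 → Fin 33 → ℝ :=
  ![v1, v2, v3, v4, v5, v6, v7, v8, v9, v10, v11, v12, v13, v14, v15, v16, v17, vEH]

theorem vf_0_0 : vFam 0 0 = (0 : ℝ) := rfl
theorem vf_0_1 : vFam 0 1 = (0 : ℝ) := rfl
theorem vf_0_2 : vFam 0 2 = ((-1) : ℝ) := rfl
theorem vf_0_3 : vFam 0 3 = ((-1) : ℝ) := rfl
theorem vf_0_4 : vFam 0 4 = (1 : ℝ) := rfl
theorem vf_0_5 : vFam 0 5 = (1 : ℝ) := rfl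
theorem vf_0_6 : vFam 0 6 = (0 : ℝ) := rfl
theorem vf_0_7 : vFam 0 7 = (0 : ℝ) := rfl
theorem vf_0_8 : vFam 0 8 = (0 : ℝ) := rfl
theorem vf_0_9 : vFam 0 9 = (0 : ℝ) := rfl
theorem vf_0_10 : vFam 0 10 = (0 : ℝ) := rfl
theorem vf_0_11 : vFam 0 11 = (0 : ℝ) := rfl
theorem vf_0_12 : vFam 0 12 = (0 : ℝ) := rfl
theorem vf_0_13 : vFam 0 13 = (0 : ℝ) := rfl
theorem vf_0_14 : vFam 0 14 = (0 : ℝ) := rfl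
theorem vf_0_15 : vFam 0 15 = (0 : ℝ) := rfl
theorem vf_0_16 : vFam 0 16 = (0 : ℝ) := rfl
theorem vf_0_17 : vFam 0 17 = (0 : ℝ) := rfl
theorem vf_0_18 : vFam 0 18 = (0 : ℝ) := rfl
theorem vf_0_19 : vFam 0 19 = (0 : ℝ) := rfl
theorem vf_0_20 : vFam 0 20 = (0 : ℝ) := rfl
theorem vf_0_21 : vFam 0 21 = (0 : ℝ) := rfl
theorem vf_0_22 : vFam 0 22 = (0 : ℝ) := rfl
theorem vf_0_23 : vFam 0 23 = (0 : ℝ) := rfl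
theorem vf_0_24 : vFam 0 24 = (0 : ℝ) := rfl
theorem vf_0_25 : vFam 0 25 = (0 : ℝ) := rfl
theorem vf_0_26 : vFam 0 26 = (0 : ℝ) := rfl
theorem vf_0_27 : vFam 0 27 = (0 : ℝ) := rfl
theorem vf_0_28 : vFam 0 28 = (0 : ℝ) := rfl
theorem vf_0_29 : vFam 0 29 = (0 : ℝ) := rfl
theorem vf_0_30 : vFam 0 30 = (0 : ℝ) := rfl
theorem vf_0_31 : vFam 0 31 = (0 : ℝ) := rfl
theorem vf_0_32 : vFam 0 32 = (0 : ℝ) := rfl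
theorem vf_1_0 : vFam 1 0 = (0 : ℝ) := rfl
theorem vf_1_1 : vFam 1 1 = (0 : ℝ) := rfl
theorem vf_1_2 : vFam 1 2 = (0 : ℝ) := rfl
theorem vf_1_3 : vFam 1 3 = (0 : ℝ) := rfl
theorem vf_1_4 : vFam 1 4 = (0 : ℝ) := rfl
theorem vf_1_5 : vFam 1 5 = (0 : ℝ) := rfl
theorem vf_1_6 : vFam 1 6 = (0 : ℝ) := rfl
theorem vf_1_7 : vFam 1 7 = (0 : ℝ) := rfl
theorem vf_1_8 : vFam 1 8 = (1 : ℝ) := rfl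
theorem vf_1_9 : vFam 1 9 = ((-1) : ℝ) := rfl
theorem vf_1_10 : vFam 1 10 = ((-1) : ℝ) := rfl
theorem vf_1_11 : vFam 1 11 = (1 : ℝ) := rfl
theorem vf_1_12 : vFam 1 12 = (0 : ℝ) := rfl
theorem vf_1_13 : vFam 1 13 = (0 : ℝ) := rfl
theorem vf_1_14 : vFam 1 14 = (0 : ℝ) := rfl
theorem vf_1_15 : vFam 1 15 = (0 : ℝ) := rfl
theorem vf_1_16 : vFam 1 16 = (0 : ℝ) := rfl
theorem vf_1_17 : vFam 1 17 = (0 : ℝ) := rfl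
theorem vf_1_18 : vFam 1 18 = (0 : ℝ) := rfl
theorem vf_1_19 : vFam 1 19 = (0 : ℝ) := rfl
theorem vf_1_20 : vFam 1 20 = (0 : ℝ) := rfl
theorem vf_1_21 : vFam 1 21 = (0 : ℝ) := rfl
theorem vf_1_22 : vFam 1 22 = (0 : ℝ) := rfl
theorem vf_1_23 : vFam 1 23 = (0 : ℝ) := rfl
theorem vf_1_24 : vFam 1 24 = (0 : ℝ) := rfl
theorem vf_1_25 : vFam 1 25 = (0 : ℝ) := rfl
theorem vf_1_26 : vFam 1 26 = (0 : ℝ) := rfl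
theorem vf_1_27 : vFam 1 27 = (0 : ℝ) := rfl
theorem vf_1_28 : vFam 1 28 = (0 : ℝ) := rfl
theorem vf_1_29 : vFam 1 29 = (0 : ℝ) := rfl
theorem vf_1_30 : vFam 1 30 = (0 : ℝ) := rfl
theorem vf_1_31 : vFam 1 31 = (0 : ℝ) := rfl
theorem vf_1_32 : vFam 1 32 = (0 : ℝ) := rfl
theorem vf_2_0 : vFam 2 0 = (0 : ℝ) := rfl
theorem vf_2_1 : vFam 2 1 = (0 : ℝ) := rfl
theorem vf_2_2 : vFam 2 2 = (0 : ℝ) := rfl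
theorem vf_2_3 : vFam 2 3 = (0 : ℝ) := rfl
theorem vf_2_4 : vFam 2 4 = (0 : ℝ) := rfl
theorem vf_2_5 : vFam 2 5 = (0 : ℝ) := rfl
theorem vf_2_6 : vFam 2 6 = (0 : ℝ) := rfl
theorem vf_2_7 : vFam 2 7 = (0 : ℝ) := rfl
theorem vf_2_8 : vFam 2 8 = (0 : ℝ) := rfl
theorem vf_2_9 : vFam 2 9 = (0 : ℝ) := rfl
theorem vf_2_10 : vFam 2 10 = (0 : ℝ) := rfl
theorem vf_2_11 : vFam 2 11 = (0 : ℝ) := rfl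
theorem vf_2_12 : vFam 2 12 = (0 : ℝ) := rfl
theorem vf_2_13 : vFam 2 13 = (1 : ℝ) := rfl
theorem vf_2_14 : vFam 2 14 = (1 : ℝ) := rfl
theorem vf_2_15 : vFam 2 15 = (0 : ℝ) := rfl
theorem vf_2_16 : vFam 2 16 = (0 : ℝ) := rfl
theorem vf_2_17 : vFam 2 17 = (1 : ℝ) := rfl
theorem vf_2_18 : vFam 2 18 = (0 : ℝ) := rfl
theorem vf_2_19 : vFam 2 19 = (0 : ℝ) := rfl
theorem vf_2_20 : vFam 2 20 = (0 : ℝ) := rfl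
theorem vf_2_21 : vFam 2 21 = (0 : ℝ) := rfl
theorem vf_2_22 : vFam 2 22 = (0 : ℝ) := rfl
theorem vf_2_23 : vFam 2 23 = (0 : ℝ) := rfl
theorem vf_2_24 : vFam 2 24 = (0 : ℝ) := rfl
theorem vf_2_25 : vFam 2 25 = (0 : ℝ) := rfl
theorem vf_2_26 : vFam 2 26 = (0 : ℝ) := rfl
theorem vf_2_27 : vFam 2 27 = (0 : ℝ) := rfl
theorem vf_2_28 : vFam 2 28 = (0 : ℝ) := rfl
theorem vf_2_29 : vFam 2 29 = (0 : ℝ) := rfl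
theorem vf_2_30 : vFam 2 30 = (0 : ℝ) := rfl
theorem vf_2_31 : vFam 2 31 = (0 : ℝ) := rfl
theorem vf_2_32 : vFam 2 32 = (0 : ℝ) := rfl
theorem vf_3_0 : vFam 3 0 = (0 : ℝ) := rfl
theorem vf_3_1 : vFam 3 1 = (0 : ℝ) := rfl
theorem vf_3_2 : vFam 3 2 = (0 : ℝ) := rfl
theorem vf_3_3 : vFam 3 3 = (0 : ℝ) := rfl
theorem vf_3_4 : vFam 3 4 = (0 : ℝ) := rfl
theorem vf_3_5 : vFam 3 5 = (0 : ℝ) := rfl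
theorem vf_3_6 : vFam 3 6 = (0 : ℝ) := rfl
theorem vf_3_7 : vFam 3 7 = (0 : ℝ) := rfl
theorem vf_3_8 : vFam 3 8 = (0 : ℝ) := rfl
theorem vf_3_9 : vFam 3 9 = (0 : ℝ) := rfl
theorem vf_3_10 : vFam 3 10 = (0 : ℝ) := rfl
theorem vf_3_11 : vFam 3 11 = (0 : ℝ) := rfl
theorem vf_3_12 : vFam 3 12 = ((-1) : ℝ) := rfl
theorem vf_3_13 : vFam 3 13 = ((-1) : ℝ) := rfl
theorem vf_3_14 : vFam 3 14 = (0 : ℝ) := rfl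
theorem vf_3_15 : vFam 3 15 = (1 : ℝ) := rfl
theorem vf_3_16 : vFam 3 16 = (1 : ℝ) := rfl
theorem vf_3_17 : vFam 3 17 = (0 : ℝ) := rfl
theorem vf_3_18 : vFam 3 18 = (0 : ℝ) := rfl
theorem vf_3_19 : vFam 3 19 = (0 : ℝ) := rfl
theorem vf_3_20 : vFam 3 20 = (0 : ℝ) := rfl
theorem vf_3_21 : vFam 3 21 = (0 : ℝ) := rfl
theorem vf_3_22 : vFam 3 22 = (0 : ℝ) := rfl
theorem vf_3_23 : vFam 3 23 = (0 : ℝ) := rfl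
theorem vf_3_24 : vFam 3 24 = (0 : ℝ) := rfl
theorem vf_3_25 : vFam 3 25 = (0 : ℝ) := rfl
theorem vf_3_26 : vFam 3 26 = (0 : ℝ) := rfl
theorem vf_3_27 : vFam 3 27 = (0 : ℝ) := rfl
theorem vf_3_28 : vFam 3 28 = (0 : ℝ) := rfl
theorem vf_3_29 : vFam 3 29 = (0 : ℝ) := rfl
theorem vf_3_30 : vFam 3 30 = (0 : ℝ) := rfl
theorem vf_3_31 : vFam 3 31 = (0 : ℝ) := rfl
theorem vf_3_32 : vFam 3 32 = (0 : ℝ) := rfl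
theorem vf_4_0 : vFam 4 0 = (0 : ℝ) := rfl
theorem vf_4_1 : vFam 4 1 = (0 : ℝ) := rfl
theorem vf_4_2 : vFam 4 2 = (0 : ℝ) := rfl
theorem vf_4_3 : vFam 4 3 = (0 : ℝ) := rfl
theorem vf_4_4 : vFam 4 4 = (0 : ℝ) := rfl
theorem vf_4_5 : vFam 4 5 = (0 : ℝ) := rfl
theorem vf_4_6 : vFam 4 6 = (0 : ℝ) := rfl
theorem vf_4_7 : vFam 4 7 = (0 : ℝ) := rfl
theorem vf_4_8 : vFam 4 8 = (0 : ℝ) := rfl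
theorem vf_4_9 : vFam 4 9 = (0 : ℝ) := rfl
theorem vf_4_10 : vFam 4 10 = (0 : ℝ) := rfl
theorem vf_4_11 : vFam 4 11 = (0 : ℝ) := rfl
theorem vf_4_12 : vFam 4 12 = (0 : ℝ) := rfl
theorem vf_4_13 : vFam 4 13 = (0 : ℝ) := rfl
theorem vf_4_14 : vFam 4 14 = (0 : ℝ) := rfl
theorem vf_4_15 : vFam 4 15 = (0 : ℝ) := rfl
theorem vf_4_16 : vFam 4 16 = (1 : ℝ) := rfl
theorem vf_4_17 : vFam 4 17 = (2 : ℝ) := rfl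
theorem vf_4_18 : vFam 4 18 = (0 : ℝ) := rfl
theorem vf_4_19 : vFam 4 19 = (0 : ℝ) := rfl
theorem vf_4_20 : vFam 4 20 = (0 : ℝ) := rfl
theorem vf_4_21 : vFam 4 21 = (0 : ℝ) := rfl
theorem vf_4_22 : vFam 4 22 = (0 : ℝ) := rfl
theorem vf_4_23 : vFam 4 23 = (0 : ℝ) := rfl
theorem vf_4_24 : vFam 4 24 = (0 : ℝ) := rfl
theorem vf_4_25 : vFam 4 25 = (0 : ℝ) := rfl
theorem vf_4_26 : vFam 4 26 = (0 : ℝ) := rfl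
theorem vf_4_27 : vFam 4 27 = (0 : ℝ) := rfl
theorem vf_4_28 : vFam 4 28 = (0 : ℝ) := rfl
theorem vf_4_29 : vFam 4 29 = (0 : ℝ) := rfl
theorem vf_4_30 : vFam 4 30 = (0 : ℝ) := rfl
theorem vf_4_31 : vFam 4 31 = (0 : ℝ) := rfl
theorem vf_4_32 : vFam 4 32 = (0 : ℝ) := rfl
theorem vf_5_0 : vFam 5 0 = (0 : ℝ) := rfl
theorem vf_5_1 : vFam 5 1 = (0 : ℝ) := rfl
theorem vf_5_2 : vFam 5 2 = (1 : ℝ) := rfl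
theorem vf_5_3 : vFam 5 3 = (0 : ℝ) := rfl
theorem vf_5_4 : vFam 5 4 = (0 : ℝ) := rfl
theorem vf_5_5 : vFam 5 5 = (0 : ℝ) := rfl
theorem vf_5_6 : vFam 5 6 = (0 : ℝ) := rfl
theorem vf_5_7 : vFam 5 7 = (0 : ℝ) := rfl
theorem vf_5_8 : vFam 5 8 = (0 : ℝ) := rfl
theorem vf_5_9 : vFam 5 9 = (0 : ℝ) := rfl
theorem vf_5_10 : vFam 5 10 = (0 : ℝ) := rfl
theorem vf_5_11 : vFam 5 11 = (0 : ℝ) := rfl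
theorem vf_5_12 : vFam 5 12 = (0 : ℝ) := rfl
theorem vf_5_13 : vFam 5 13 = (0 : ℝ) := rfl
theorem vf_5_14 : vFam 5 14 = (0 : ℝ) := rfl
theorem vf_5_15 : vFam 5 15 = (0 : ℝ) := rfl
theorem vf_5_16 : vFam 5 16 = (1 : ℝ) := rfl
theorem vf_5_17 : vFam 5 17 = (0 : ℝ) := rfl
theorem vf_5_18 : vFam 5 18 = (0 : ℝ) := rfl
theorem vf_5_19 : vFam 5 19 = (0 : ℝ) := rfl
theorem vf_5_20 : vFam 5 20 = (0 : ℝ) := rfl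
theorem vf_5_21 : vFam 5 21 = (0 : ℝ) := rfl
theorem vf_5_22 : vFam 5 22 = (0 : ℝ) := rfl
theorem vf_5_23 : vFam 5 23 = (0 : ℝ) := rfl
theorem vf_5_24 : vFam 5 24 = (0 : ℝ) := rfl
theorem vf_5_25 : vFam 5 25 = (0 : ℝ) := rfl
theorem vf_5_26 : vFam 5 26 = (0 : ℝ) := rfl
theorem vf_5_27 : vFam 5 27 = (0 : ℝ) := rfl
theorem vf_5_28 : vFam 5 28 = (0 : ℝ) := rfl
theorem vf_5_29 : vFam 5 29 = (0 : ℝ) := rfl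
theorem vf_5_30 : vFam 5 30 = (0 : ℝ) := rfl
theorem vf_5_31 : vFam 5 31 = (0 : ℝ) := rfl
theorem vf_5_32 : vFam 5 32 = (0 : ℝ) := rfl
theorem vf_6_0 : vFam 6 0 = (0 : ℝ) := rfl
theorem vf_6_1 : vFam 6 1 = (0 : ℝ) := rfl
theorem vf_6_2 : vFam 6 2 = (0 : ℝ) := rfl
theorem vf_6_3 : vFam 6 3 = (0 : ℝ) := rfl
theorem vf_6_4 : vFam 6 4 = (0 : ℝ) := rfl
theorem vf_6_5 : vFam 6 5 = (0 : ℝ) := rfl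
theorem vf_6_6 : vFam 6 6 = (0 : ℝ) := rfl
theorem vf_6_7 : vFam 6 7 = (0 : ℝ) := rfl
theorem vf_6_8 : vFam 6 8 = (0 : ℝ) := rfl
theorem vf_6_9 : vFam 6 9 = (0 : ℝ) := rfl
theorem vf_6_10 : vFam 6 10 = (0 : ℝ) := rfl
theorem vf_6_11 : vFam 6 11 = (0 : ℝ) := rfl
theorem vf_6_12 : vFam 6 12 = (0 : ℝ) := rfl
theorem vf_6_13 : vFam 6 13 = (0 : ℝ) := rfl
theorem vf_6_14 : vFam 6 14 = (0 : ℝ) := rfl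
theorem vf_6_15 : vFam 6 15 = (0 : ℝ) := rfl
theorem vf_6_16 : vFam 6 16 = (0 : ℝ) := rfl
theorem vf_6_17 : vFam 6 17 = (0 : ℝ) := rfl
theorem vf_6_18 : vFam 6 18 = (1 : ℝ) := rfl
theorem vf_6_19 : vFam 6 19 = (1 : ℝ) := rfl
theorem vf_6_20 : vFam 6 20 = (0 : ℝ) := rfl
theorem vf_6_21 : vFam 6 21 = ((-1) : ℝ) := rfl
theorem vf_6_22 : vFam 6 22 = ((-1) : ℝ) := rfl
theorem vf_6_23 : vFam 6 23 = (0 : ℝ) := rfl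
theorem vf_6_24 : vFam 6 24 = (0 : ℝ) := rfl
theorem vf_6_25 : vFam 6 25 = (0 : ℝ) := rfl
theorem vf_6_26 : vFam 6 26 = (0 : ℝ) := rfl
theorem vf_6_27 : vFam 6 27 = (0 : ℝ) := rfl
theorem vf_6_28 : vFam 6 28 = (0 : ℝ) := rfl
theorem vf_6_29 : vFam 6 29 = (0 : ℝ) := rfl
theorem vf_6_30 : vFam 6 30 = (0 : ℝ) := rfl
theorem vf_6_31 : vFam 6 31 = (0 : ℝ) := rfl
theorem vf_6_32 : vFam 6 32 = (0 : ℝ) := rfl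
theorem vf_7_0 : vFam 7 0 = (0 : ℝ) := rfl
theorem vf_7_1 : vFam 7 1 = (0 : ℝ) := rfl
theorem vf_7_2 : vFam 7 2 = (0 : ℝ) := rfl
theorem vf_7_3 : vFam 7 3 = (2 : ℝ) := rfl
theorem vf_7_4 : vFam 7 4 = (0 : ℝ) := rfl
theorem vf_7_5 : vFam 7 5 = (0 : ℝ) := rfl
theorem vf_7_6 : vFam 7 6 = (0 : ℝ) := rfl
theorem vf_7_7 : vFam 7 7 = (0 : ℝ) := rfl
theorem vf_7_8 : vFam 7 8 = (0 : ℝ) := rfl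
theorem vf_7_9 : vFam 7 9 = (0 : ℝ) := rfl
theorem vf_7_10 : vFam 7 10 = (0 : ℝ) := rfl
theorem vf_7_11 : vFam 7 11 = (0 : ℝ) := rfl
theorem vf_7_12 : vFam 7 12 = ((-2) : ℝ) := rfl
theorem vf_7_13 : vFam 7 13 = ((-2) : ℝ) := rfl
theorem vf_7_14 : vFam 7 14 = (0 : ℝ) := rfl
theorem vf_7_15 : vFam 7 15 = (0 : ℝ) := rfl
theorem vf_7_16 : vFam 7 16 = (0 : ℝ) := rfl
theorem vf_7_17 : vFam 7 17 = (0 : ℝ) := rfl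
theorem vf_7_18 : vFam 7 18 = (1 : ℝ) := rfl
theorem vf_7_19 : vFam 7 19 = (0 : ℝ) := rfl
theorem vf_7_20 : vFam 7 20 = (0 : ℝ) := rfl
theorem vf_7_21 : vFam 7 21 = ((-1) : ℝ) := rfl
theorem vf_7_22 : vFam 7 22 = (0 : ℝ) := rfl
theorem vf_7_23 : vFam 7 23 = (0 : ℝ) := rfl
theorem vf_7_24 : vFam 7 24 = (0 : ℝ) := rfl
theorem vf_7_25 : vFam 7 25 = (0 : ℝ) := rfl
theorem vf_7_26 : vFam 7 26 = (0 : ℝ) := rfl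
theorem vf_7_27 : vFam 7 27 = (0 : ℝ) := rfl
theorem vf_7_28 : vFam 7 28 = (0 : ℝ) := rfl
theorem vf_7_29 : vFam 7 29 = (0 : ℝ) := rfl
theorem vf_7_30 : vFam 7 30 = (0 : ℝ) := rfl
theorem vf_7_31 : vFam 7 31 = (0 : ℝ) := rfl
theorem vf_7_32 : vFam 7 32 = (0 : ℝ) := rfl
theorem vf_8_0 : vFam 8 0 = ((-1) : ℝ) := rfl
theorem vf_8_1 : vFam 8 1 = (0 : ℝ) := rfl
theorem vf_8_2 : vFam 8 2 = (0 : ℝ) := rfl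
theorem vf_8_3 : vFam 8 3 = (0 : ℝ) := rfl
theorem vf_8_4 : vFam 8 4 = (0 : ℝ) := rfl
theorem vf_8_5 : vFam 8 5 = (0 : ℝ) := rfl
theorem vf_8_6 : vFam 8 6 = (0 : ℝ) := rfl
theorem vf_8_7 : vFam 8 7 = (0 : ℝ) := rfl
theorem vf_8_8 : vFam 8 8 = (0 : ℝ) := rfl
theorem vf_8_9 : vFam 8 9 = (0 : ℝ) := rfl
theorem vf_8_10 : vFam 8 10 = (0 : ℝ) := rfl
theorem vf_8_11 : vFam 8 11 = (0 : ℝ) := rfl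
theorem vf_8_12 : vFam 8 12 = (0 : ℝ) := rfl
theorem vf_8_13 : vFam 8 13 = (0 : ℝ) := rfl
theorem vf_8_14 : vFam 8 14 = (0 : ℝ) := rfl
theorem vf_8_15 : vFam 8 15 = (0 : ℝ) := rfl
theorem vf_8_16 : vFam 8 16 = (0 : ℝ) := rfl
theorem vf_8_17 : vFam 8 17 = (0 : ℝ) := rfl
theorem vf_8_18 : vFam 8 18 = (0 : ℝ) := rfl
theorem vf_8_19 : vFam 8 19 = (0 : ℝ) := rfl
theorem vf_8_20 : vFam 8 20 = (0 : ℝ) := rfl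
theorem vf_8_21 : vFam 8 21 = (1 : ℝ) := rfl
theorem vf_8_22 : vFam 8 22 = (0 : ℝ) := rfl
theorem vf_8_23 : vFam 8 23 = (0 : ℝ) := rfl
theorem vf_8_24 : vFam 8 24 = (0 : ℝ) := rfl
theorem vf_8_25 : vFam 8 25 = (0 : ℝ) := rfl
theorem vf_8_26 : vFam 8 26 = (0 : ℝ) := rfl
theorem vf_8_27 : vFam 8 27 = (0 : ℝ) := rfl
theorem vf_8_28 : vFam 8 28 = (0 : ℝ) := rfl
theorem vf_8_29 : vFam 8 29 = (0 : ℝ) := rfl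
theorem vf_8_30 : vFam 8 30 = (0 : ℝ) := rfl
theorem vf_8_31 : vFam 8 31 = (0 : ℝ) := rfl
theorem vf_8_32 : vFam 8 32 = (0 : ℝ) := rfl
theorem vf_9_0 : vFam 9 0 = (0 : ℝ) := rfl
theorem vf_9_1 : vFam 9 1 = (0 : ℝ) := rfl
theorem vf_9_2 : vFam 9 2 = (0 : ℝ) := rfl
theorem vf_9_3 : vFam 9 3 = (0 : ℝ) := rfl
theorem vf_9_4 : vFam 9 4 = (0 : ℝ) := rfl
theorem vf_9_5 : vFam 9 5 = (0 : ℝ) := rfl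
theorem vf_9_6 : vFam 9 6 = (0 : ℝ) := rfl
theorem vf_9_7 : vFam 9 7 = (0 : ℝ) := rfl
theorem vf_9_8 : vFam 9 8 = (0 : ℝ) := rfl
theorem vf_9_9 : vFam 9 9 = (0 : ℝ) := rfl
theorem vf_9_10 : vFam 9 10 = (0 : ℝ) := rfl
theorem vf_9_11 : vFam 9 11 = (0 : ℝ) := rfl
theorem vf_9_12 : vFam 9 12 = (0 : ℝ) := rfl
theorem vf_9_13 : vFam 9 13 = (0 : ℝ) := rfl
theorem vf_9_14 : vFam 9 14 = (0 : ℝ) := rfl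
theorem vf_9_15 : vFam 9 15 = (0 : ℝ) := rfl
theorem vf_9_16 : vFam 9 16 = (0 : ℝ) := rfl
theorem vf_9_17 : vFam 9 17 = (0 : ℝ) := rfl
theorem vf_9_18 : vFam 9 18 = (1 : ℝ) := rfl
theorem vf_9_19 : vFam 9 19 = (0 : ℝ) := rfl
theorem vf_9_20 : vFam 9 20 = ((-1) : ℝ) := rfl
theorem vf_9_21 : vFam 9 21 = ((-1) : ℝ) := rfl
theorem vf_9_22 : vFam 9 22 = (0 : ℝ) := rfl
theorem vf_9_23 : vFam 9 23 = (1 : ℝ) := rfl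
theorem vf_9_24 : vFam 9 24 = (0 : ℝ) := rfl
theorem vf_9_25 : vFam 9 25 = (0 : ℝ) := rfl
theorem vf_9_26 : vFam 9 26 = (0 : ℝ) := rfl
theorem vf_9_27 : vFam 9 27 = (0 : ℝ) := rfl
theorem vf_9_28 : vFam 9 28 = (0 : ℝ) := rfl
theorem vf_9_29 : vFam 9 29 = (0 : ℝ) := rfl
theorem vf_9_30 : vFam 9 30 = (0 : ℝ) := rfl
theorem vf_9_31 : vFam 9 31 = (0 : ℝ) := rfl
theorem vf_9_32 : vFam 9 32 = (0 : ℝ) := rfl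
theorem vf_10_0 : vFam 10 0 = (0 : ℝ) := rfl
theorem vf_10_1 : vFam 10 1 = (0 : ℝ) := rfl
theorem vf_10_2 : vFam 10 2 = ((-3/2) : ℝ) := rfl
theorem vf_10_3 : vFam 10 3 = (0 : ℝ) := rfl
theorem vf_10_4 : vFam 10 4 = (0 : ℝ) := rfl
theorem vf_10_5 : vFam 10 5 = (0 : ℝ) := rfl
theorem vf_10_6 : vFam 10 6 = (0 : ℝ) := rfl
theorem vf_10_7 : vFam 10 7 = (0 : ℝ) := rfl
theorem vf_10_8 : vFam 10 8 = (1 : ℝ) := rfl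
theorem vf_10_9 : vFam 10 9 = (1 : ℝ) := rfl
theorem vf_10_10 : vFam 10 10 = (1 : ℝ) := rfl
theorem vf_10_11 : vFam 10 11 = (1 : ℝ) := rfl
theorem vf_10_12 : vFam 10 12 = (0 : ℝ) := rfl
theorem vf_10_13 : vFam 10 13 = ((-2) : ℝ) := rfl
theorem vf_10_14 : vFam 10 14 = ((-1) : ℝ) := rfl
theorem vf_10_15 : vFam 10 15 = ((-1) : ℝ) := rfl
theorem vf_10_16 : vFam 10 16 = (0 : ℝ) := rfl
theorem vf_10_17 : vFam 10 17 = (0 : ℝ) := rfl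
theorem vf_10_18 : vFam 10 18 = (0 : ℝ) := rfl
theorem vf_10_19 : vFam 10 19 = (0 : ℝ) := rfl
theorem vf_10_20 : vFam 10 20 = (0 : ℝ) := rfl
theorem vf_10_21 : vFam 10 21 = (0 : ℝ) := rfl
theorem vf_10_22 : vFam 10 22 = (0 : ℝ) := rfl
theorem vf_10_23 : vFam 10 23 = (0 : ℝ) := rfl
theorem vf_10_24 : vFam 10 24 = (1 : ℝ) := rfl
theorem vf_10_25 : vFam 10 25 = (0 : ℝ) := rfl
theorem vf_10_26 : vFam 10 26 = (0 : ℝ) := rfl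
theorem vf_10_27 : vFam 10 27 = (0 : ℝ) := rfl
theorem vf_10_28 : vFam 10 28 = (0 : ℝ) := rfl
theorem vf_10_29 : vFam 10 29 = (0 : ℝ) := rfl
theorem vf_10_30 : vFam 10 30 = (1 : ℝ) := rfl
theorem vf_10_31 : vFam 10 31 = (0 : ℝ) := rfl
theorem vf_10_32 : vFam 10 32 = (0 : ℝ) := rfl
theorem vf_11_0 : vFam 11 0 = (0 : ℝ) := rfl
theorem vf_11_1 : vFam 11 1 = (0 : ℝ) := rfl
theorem vf_11_2 : vFam 11 2 = (0 : ℝ) := rfl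
theorem vf_11_3 : vFam 11 3 = (0 : ℝ) := rfl
theorem vf_11_4 : vFam 11 4 = (0 : ℝ) := rfl
theorem vf_11_5 : vFam 11 5 = (0 : ℝ) := rfl
theorem vf_11_6 : vFam 11 6 = (0 : ℝ) := rfl
theorem vf_11_7 : vFam 11 7 = (0 : ℝ) := rfl
theorem vf_11_8 : vFam 11 8 = (0 : ℝ) := rfl
theorem vf_11_9 : vFam 11 9 = (0 : ℝ) := rfl
theorem vf_11_10 : vFam 11 10 = (0 : ℝ) := rfl
theorem vf_11_11 : vFam 11 11 = (0 : ℝ) := rfl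
theorem vf_11_12 : vFam 11 12 = (0 : ℝ) := rfl
theorem vf_11_13 : vFam 11 13 = (0 : ℝ) := rfl
theorem vf_11_14 : vFam 11 14 = (0 : ℝ) := rfl
theorem vf_11_15 : vFam 11 15 = (0 : ℝ) := rfl
theorem vf_11_16 : vFam 11 16 = (0 : ℝ) := rfl
theorem vf_11_17 : vFam 11 17 = (0 : ℝ) := rfl
theorem vf_11_18 : vFam 11 18 = (0 : ℝ) := rfl
theorem vf_11_19 : vFam 11 19 = (0 : ℝ) := rfl
theorem vf_11_20 : vFam 11 20 = (0 : ℝ) := rfl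
theorem vf_11_21 : vFam 11 21 = (0 : ℝ) := rfl
theorem vf_11_22 : vFam 11 22 = (0 : ℝ) := rfl
theorem vf_11_23 : vFam 11 23 = (0 : ℝ) := rfl
theorem vf_11_24 : vFam 11 24 = (0 : ℝ) := rfl
theorem vf_11_25 : vFam 11 25 = (1 : ℝ) := rfl
theorem vf_11_26 : vFam 11 26 = (1 : ℝ) := rfl
theorem vf_11_27 : vFam 11 27 = (0 : ℝ) := rfl
theorem vf_11_28 : vFam 11 28 = (0 : ℝ) := rfl
theorem vf_11_29 : vFam 11 29 = (0 : ℝ) := rfl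
theorem vf_11_30 : vFam 11 30 = (0 : ℝ) := rfl
theorem vf_11_31 : vFam 11 31 = (0 : ℝ) := rfl
theorem vf_11_32 : vFam 11 32 = (1 : ℝ) := rfl
theorem vf_12_0 : vFam 12 0 = (0 : ℝ) := rfl
theorem vf_12_1 : vFam 12 1 = (0 : ℝ) := rfl
theorem vf_12_2 : vFam 12 2 = (0 : ℝ) := rfl
theorem vf_12_3 : vFam 12 3 = (0 : ℝ) := rfl
theorem vf_12_4 : vFam 12 4 = (0 : ℝ) := rfl
theorem vf_12_5 : vFam 12 5 = (0 : ℝ) := rfl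
theorem vf_12_6 : vFam 12 6 = (0 : ℝ) := rfl
theorem vf_12_7 : vFam 12 7 = (0 : ℝ) := rfl
theorem vf_12_8 : vFam 12 8 = (0 : ℝ) := rfl
theorem vf_12_9 : vFam 12 9 = (0 : ℝ) := rfl
theorem vf_12_10 : vFam 12 10 = (0 : ℝ) := rfl
theorem vf_12_11 : vFam 12 11 = (0 : ℝ) := rfl
theorem vf_12_12 : vFam 12 12 = (0 : ℝ) := rfl
theorem vf_12_13 : vFam 12 13 = (0 : ℝ) := rfl
theorem vf_12_14 : vFam 12 14 = (0 : ℝ) := rfl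
theorem vf_12_15 : vFam 12 15 = (0 : ℝ) := rfl
theorem vf_12_16 : vFam 12 16 = (0 : ℝ) := rfl
theorem vf_12_17 : vFam 12 17 = (0 : ℝ) := rfl
theorem vf_12_18 : vFam 12 18 = (0 : ℝ) := rfl
theorem vf_12_19 : vFam 12 19 = (0 : ℝ) := rfl
theorem vf_12_20 : vFam 12 20 = (0 : ℝ) := rfl
theorem vf_12_21 : vFam 12 21 = (0 : ℝ) := rfl
theorem vf_12_22 : vFam 12 22 = (0 : ℝ) := rfl
theorem vf_12_23 : vFam 12 23 = (0 : ℝ) := rfl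
theorem vf_12_24 : vFam 12 24 = (0 : ℝ) := rfl
theorem vf_12_25 : vFam 12 25 = (1 : ℝ) := rfl
theorem vf_12_26 : vFam 12 26 = (0 : ℝ) := rfl
theorem vf_12_27 : vFam 12 27 = (0 : ℝ) := rfl
theorem vf_12_28 : vFam 12 28 = (0 : ℝ) := rfl
theorem vf_12_29 : vFam 12 29 = (0 : ℝ) := rfl
theorem vf_12_30 : vFam 12 30 = (0 : ℝ) := rfl
theorem vf_12_31 : vFam 12 31 = ((-1) : ℝ) := rfl
theorem vf_12_32 : vFam 12 32 = (0 : ℝ) := rfl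
theorem vf_13_0 : vFam 13 0 = (0 : ℝ) := rfl
theorem vf_13_1 : vFam 13 1 = (0 : ℝ) := rfl
theorem vf_13_2 : vFam 13 2 = ((1/2) : ℝ) := rfl
theorem vf_13_3 : vFam 13 3 = (0 : ℝ) := rfl
theorem vf_13_4 : vFam 13 4 = (0 : ℝ) := rfl
theorem vf_13_5 : vFam 13 5 = (0 : ℝ) := rfl
theorem vf_13_6 : vFam 13 6 = (0 : ℝ) := rfl
theorem vf_13_7 : vFam 13 7 = (0 : ℝ) := rfl
theorem vf_13_8 : vFam 13 8 = ((-1) : ℝ) := rfl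
theorem vf_13_9 : vFam 13 9 = (1 : ℝ) := rfl
theorem vf_13_10 : vFam 13 10 = (0 : ℝ) := rfl
theorem vf_13_11 : vFam 13 11 = ((-1) : ℝ) := rfl
theorem vf_13_12 : vFam 13 12 = (0 : ℝ) := rfl
theorem vf_13_13 : vFam 13 13 = (0 : ℝ) := rfl
theorem vf_13_14 : vFam 13 14 = (0 : ℝ) := rfl
theorem vf_13_15 : vFam 13 15 = (0 : ℝ) := rfl
theorem vf_13_16 : vFam 13 16 = (0 : ℝ) := rfl
theorem vf_13_17 : vFam 13 17 = (0 : ℝ) := rfl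
theorem vf_13_18 : vFam 13 18 = (0 : ℝ) := rfl
theorem vf_13_19 : vFam 13 19 = (0 : ℝ) := rfl
theorem vf_13_20 : vFam 13 20 = (0 : ℝ) := rfl
theorem vf_13_21 : vFam 13 21 = (0 : ℝ) := rfl
theorem vf_13_22 : vFam 13 22 = (0 : ℝ) := rfl
theorem vf_13_23 : vFam 13 23 = (0 : ℝ) := rfl
theorem vf_13_24 : vFam 13 24 = (0 : ℝ) := rfl
theorem vf_13_25 : vFam 13 25 = (0 : ℝ) := rfl
theorem vf_13_26 : vFam 13 26 = (0 : ℝ) := rfl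
theorem vf_13_27 : vFam 13 27 = (0 : ℝ) := rfl
theorem vf_13_28 : vFam 13 28 = (0 : ℝ) := rfl
theorem vf_13_29 : vFam 13 29 = (0 : ℝ) := rfl
theorem vf_13_30 : vFam 13 30 = (0 : ℝ) := rfl
theorem vf_13_31 : vFam 13 31 = (1 : ℝ) := rfl
theorem vf_13_32 : vFam 13 32 = (0 : ℝ) := rfl
theorem vf_14_0 : vFam 14 0 = (0 : ℝ) := rfl
theorem vf_14_1 : vFam 14 1 = (0 : ℝ) := rfl
theorem vf_14_2 : vFam 14 2 = (0 : ℝ) := rfl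
theorem vf_14_3 : vFam 14 3 = (0 : ℝ) := rfl
theorem vf_14_4 : vFam 14 4 = (0 : ℝ) := rfl
theorem vf_14_5 : vFam 14 5 = (0 : ℝ) := rfl
theorem vf_14_6 : vFam 14 6 = (0 : ℝ) := rfl
theorem vf_14_7 : vFam 14 7 = (0 : ℝ) := rfl
theorem vf_14_8 : vFam 14 8 = (0 : ℝ) := rfl
theorem vf_14_9 : vFam 14 9 = (0 : ℝ) := rfl
theorem vf_14_10 : vFam 14 10 = (0 : ℝ) := rfl
theorem vf_14_11 : vFam 14 11 = (0 : ℝ) := rfl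
theorem vf_14_12 : vFam 14 12 = (0 : ℝ) := rfl
theorem vf_14_13 : vFam 14 13 = (0 : ℝ) := rfl
theorem vf_14_14 : vFam 14 14 = (0 : ℝ) := rfl
theorem vf_14_15 : vFam 14 15 = (0 : ℝ) := rfl
theorem vf_14_16 : vFam 14 16 = (0 : ℝ) := rfl
theorem vf_14_17 : vFam 14 17 = (0 : ℝ) := rfl
theorem vf_14_18 : vFam 14 18 = (0 : ℝ) := rfl
theorem vf_14_19 : vFam 14 19 = (0 : ℝ) := rfl
theorem vf_14_20 : vFam 14 20 = (0 : ℝ) := rfl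
theorem vf_14_21 : vFam 14 21 = (0 : ℝ) := rfl
theorem vf_14_22 : vFam 14 22 = (0 : ℝ) := rfl
theorem vf_14_23 : vFam 14 23 = (0 : ℝ) := rfl
theorem vf_14_24 : vFam 14 24 = ((-1) : ℝ) := rfl
theorem vf_14_25 : vFam 14 25 = (0 : ℝ) := rfl
theorem vf_14_26 : vFam 14 26 = (1 : ℝ) := rfl
theorem vf_14_27 : vFam 14 27 = (1 : ℝ) := rfl
theorem vf_14_28 : vFam 14 28 = (0 : ℝ) := rfl
theorem vf_14_29 : vFam 14 29 = ((-1) : ℝ) := rfl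
theorem vf_14_30 : vFam 14 30 = (0 : ℝ) := rfl
theorem vf_14_31 : vFam 14 31 = (0 : ℝ) := rfl
theorem vf_14_32 : vFam 14 32 = (0 : ℝ) := rfl
theorem vf_15_0 : vFam 15 0 = ((-1/2) : ℝ) := rfl
theorem vf_15_1 : vFam 15 1 = (0 : ℝ) := rfl
theorem vf_15_2 : vFam 15 2 = (0 : ℝ) := rfl
theorem vf_15_3 : vFam 15 3 = (0 : ℝ) := rfl
theorem vf_15_4 : vFam 15 4 = (0 : ℝ) := rfl
theorem vf_15_5 : vFam 15 5 = (0 : ℝ) := rfl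
theorem vf_15_6 : vFam 15 6 = (1 : ℝ) := rfl
theorem vf_15_7 : vFam 15 7 = (0 : ℝ) := rfl
theorem vf_15_8 : vFam 15 8 = (0 : ℝ) := rfl
theorem vf_15_9 : vFam 15 9 = (0 : ℝ) := rfl
theorem vf_15_10 : vFam 15 10 = (0 : ℝ) := rfl
theorem vf_15_11 : vFam 15 11 = (0 : ℝ) := rfl
theorem vf_15_12 : vFam 15 12 = (0 : ℝ) := rfl
theorem vf_15_13 : vFam 15 13 = (0 : ℝ) := rfl
theorem vf_15_14 : vFam 15 14 = (0 : ℝ) := rfl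
theorem vf_15_15 : vFam 15 15 = (0 : ℝ) := rfl
theorem vf_15_16 : vFam 15 16 = (0 : ℝ) := rfl
theorem vf_15_17 : vFam 15 17 = (0 : ℝ) := rfl
theorem vf_15_18 : vFam 15 18 = (0 : ℝ) := rfl
theorem vf_15_19 : vFam 15 19 = (0 : ℝ) := rfl
theorem vf_15_20 : vFam 15 20 = (0 : ℝ) := rfl
theorem vf_15_21 : vFam 15 21 = (0 : ℝ) := rfl
theorem vf_15_22 : vFam 15 22 = (0 : ℝ) := rfl
theorem vf_15_23 : vFam 15 23 = (0 : ℝ) := rfl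
theorem vf_15_24 : vFam 15 24 = (0 : ℝ) := rfl
theorem vf_15_25 : vFam 15 25 = (0 : ℝ) := rfl
theorem vf_15_26 : vFam 15 26 = (0 : ℝ) := rfl
theorem vf_15_27 : vFam 15 27 = (1 : ℝ) := rfl
theorem vf_15_28 : vFam 15 28 = (0 : ℝ) := rfl
theorem vf_15_29 : vFam 15 29 = (0 : ℝ) := rfl
theorem vf_15_30 : vFam 15 30 = (0 : ℝ) := rfl
theorem vf_15_31 : vFam 15 31 = (0 : ℝ) := rfl
theorem vf_15_32 : vFam 15 32 = (0 : ℝ) := rfl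
theorem vf_16_0 : vFam 16 0 = (0 : ℝ) := rfl
theorem vf_16_1 : vFam 16 1 = (0 : ℝ) := rfl
theorem vf_16_2 : vFam 16 2 = (0 : ℝ) := rfl
theorem vf_16_3 : vFam 16 3 = (0 : ℝ) := rfl
theorem vf_16_4 : vFam 16 4 = (0 : ℝ) := rfl
theorem vf_16_5 : vFam 16 5 = (0 : ℝ) := rfl
theorem vf_16_6 : vFam 16 6 = (0 : ℝ) := rfl
theorem vf_16_7 : vFam 16 7 = (0 : ℝ) := rfl
theorem vf_16_8 : vFam 16 8 = (0 : ℝ) := rfl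
theorem vf_16_9 : vFam 16 9 = (0 : ℝ) := rfl
theorem vf_16_10 : vFam 16 10 = (0 : ℝ) := rfl
theorem vf_16_11 : vFam 16 11 = (0 : ℝ) := rfl
theorem vf_16_12 : vFam 16 12 = (0 : ℝ) := rfl
theorem vf_16_13 : vFam 16 13 = (0 : ℝ) := rfl
theorem vf_16_14 : vFam 16 14 = (0 : ℝ) := rfl
theorem vf_16_15 : vFam 16 15 = (0 : ℝ) := rfl
theorem vf_16_16 : vFam 16 16 = (0 : ℝ) := rfl
theorem vf_16_17 : vFam 16 17 = (0 : ℝ) := rfl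
theorem vf_16_18 : vFam 16 18 = (0 : ℝ) := rfl
theorem vf_16_19 : vFam 16 19 = (0 : ℝ) := rfl
theorem vf_16_20 : vFam 16 20 = (0 : ℝ) := rfl
theorem vf_16_21 : vFam 16 21 = (0 : ℝ) := rfl
theorem vf_16_22 : vFam 16 22 = (0 : ℝ) := rfl
theorem vf_16_23 : vFam 16 23 = (0 : ℝ) := rfl
theorem vf_16_24 : vFam 16 24 = (0 : ℝ) := rfl
theorem vf_16_25 : vFam 16 25 = (0 : ℝ) := rfl
theorem vf_16_26 : vFam 16 26 = (1 : ℝ) := rfl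
theorem vf_16_27 : vFam 16 27 = (0 : ℝ) := rfl
theorem vf_16_28 : vFam 16 28 = ((-1) : ℝ) := rfl
theorem vf_16_29 : vFam 16 29 = ((-1) : ℝ) := rfl
theorem vf_16_30 : vFam 16 30 = (0 : ℝ) := rfl
theorem vf_16_31 : vFam 16 31 = (1 : ℝ) := rfl
theorem vf_16_32 : vFam 16 32 = (0 : ℝ) := rfl
theorem vf_17_0 : vFam 17 0 = (0 : ℝ) := rfl
theorem vf_17_1 : vFam 17 1 = ((-1/4) : ℝ) := rfl
theorem vf_17_2 : vFam 17 2 = (0 : ℝ) := rfl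
theorem vf_17_3 : vFam 17 3 = (0 : ℝ) := rfl
theorem vf_17_4 : vFam 17 4 = (0 : ℝ) := rfl
theorem vf_17_5 : vFam 17 5 = (0 : ℝ) := rfl
theorem vf_17_6 : vFam 17 6 = (0 : ℝ) := rfl
theorem vf_17_7 : vFam 17 7 = ((1/2) : ℝ) := rfl
theorem vf_17_8 : vFam 17 8 = (0 : ℝ) := rfl
theorem vf_17_9 : vFam 17 9 = (0 : ℝ) := rfl
theorem vf_17_10 : vFam 17 10 = (0 : ℝ) := rfl
theorem vf_17_11 : vFam 17 11 = (1 : ℝ) := rfl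
theorem vf_17_12 : vFam 17 12 = (1 : ℝ) := rfl
theorem vf_17_13 : vFam 17 13 = (0 : ℝ) := rfl
theorem vf_17_14 : vFam 17 14 = ((-1) : ℝ) := rfl
theorem vf_17_15 : vFam 17 15 = ((-1) : ℝ) := rfl
theorem vf_17_16 : vFam 17 16 = (0 : ℝ) := rfl
theorem vf_17_17 : vFam 17 17 = (0 : ℝ) := rfl
theorem vf_17_18 : vFam 17 18 = (0 : ℝ) := rfl
theorem vf_17_19 : vFam 17 19 = (0 : ℝ) := rfl
theorem vf_17_20 : vFam 17 20 = (0 : ℝ) := rfl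
theorem vf_17_21 : vFam 17 21 = (0 : ℝ) := rfl
theorem vf_17_22 : vFam 17 22 = (0 : ℝ) := rfl
theorem vf_17_23 : vFam 17 23 = (0 : ℝ) := rfl
theorem vf_17_24 : vFam 17 24 = (0 : ℝ) := rfl
theorem vf_17_25 : vFam 17 25 = (0 : ℝ) := rfl
theorem vf_17_26 : vFam 17 26 = (0 : ℝ) := rfl
theorem vf_17_27 : vFam 17 27 = (0 : ℝ) := rfl
theorem vf_17_28 : vFam 17 28 = (0 : ℝ) := rfl
theorem vf_17_29 : vFam 17 29 = (0 : ℝ) := rfl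
theorem vf_17_30 : vFam 17 30 = (1 : ℝ) := rfl
theorem vf_17_31 : vFam 17 31 = (0 : ℝ) := rfl
theorem vf_17_32 : vFam 17 32 = (0 : ℝ) := rfl
theorem sum_apply18 (d : Fin 18 → ℝ) (k : Fin 33) :
    (∑ i, d i • vFam i) k = d 0 * vFam 0 k + d 1 * vFam 1 k + d 2 * vFam 2 k + d 3 * vFam 3 k + d 4 * vFam 4 k + d 5 * vFam 5 k + d 6 * vFam 6 k + d 7 * vFam 7 k + d 8 * vFam 8 k + d 9 * vFam 9 k + d 10 * vFam 10 k + d 11 * vFam 11 k + d 12 * vFam 12 k + d 13 * vFam 13 k + d 14 * vFam 14 k + d 15 * vFam 15 k + d 16 * vFam 16 k + d 17 * vFam 17 k := by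
  simp [Fin.sum_univ_succ, show ((2 : Fin 17).succ) = (3 : Fin 18) from rfl, show ((2 : Fin 16).succ.succ) = (4 : Fin 18) from rfl, show ((2 : Fin 15).succ.succ.succ) = (5 : Fin 18) from rfl, show ((2 : Fin 14).succ.succ.succ.succ) = (6 : Fin 18) from rfl, show ((2 : Fin 13).succ.succ.succ.succ.succ) = (7 : Fin 18) from rfl, show ((2 : Fin 12).succ.succ.succ.succ.succ.succ) = (8 : Fin 18) from rfl, show ((2 : Fin 11).succ.succ.succ.succ.succ.succ.succ) = (9 : Fin 18) from rfl, show ((2 : Fin 10).succ.succ.succ.succ.succ.succ.succ.succ) = (10 : Fin 18) from rfl, show ((2 : Fin 9).succ.succ.succ.succ.succ.succ.succ.succ.succ) = (11 : Fin 18) from rfl, show ((2 : Fin 8).succ.succ.succ.succ.succ.succ.succ.succ.succ.succ) = (12 : Fin 18) from rfl, show ((2 : Fin 7).succ.succ.succ.succ.succ.succ.succ.succ.succ.succ.succ) = (13 : Fin 18) from rfl, show ((2 : Fin 6).succ.succ.succ.succ.succ.succ.succ.succ.succ.succ.succ.succ) = (14 : Fin 18) from rfl, show ((2 : Fin 5).succ.succ.succ.succ.succ.succ.succ.succ.succ.succ.succ.succ.succ)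 = (15 : Fin 18) from rfl, show ((2 : Fin 4).succ.succ.succ.succ.succ.succ.succ.succ.succ.succ.succ.succ.succ.succ) = (16 : Fin 18) from rfl, show ((2 : Fin 3).succ.succ.succ.succ.succ.succ.succ.succ.succ.succ.succ.succ.succ.succ.succ) = (17 : Fin 18) from rfl]
  try ring
def coeffs (x : Fin 33 → ℝ) : Fin 18 → ℝ :=
  ![1 * x 4, (1/2) * x 8 + (1/2) * x 9 + (-1) * x 10, (-4) * x 1 + 1 * x 8 + 1 * x 9 + (-1) * x 12 + 1 * x 13, (-4) * x 1 + (-1) * x 3 + (-1) * x 4 + (-1) * x 12, 4 * x 1 + (-1) * x 2 + 1 * x 3 + (-3/4) * x 8 + (-1/4) * x 9 + (-1/2) * x 10 + 1 * x 12 + 1 * x 16, 1 * x 2 + 1 * x 4 + (3/4) * x 8 + (1/4) * x 9 + (1/2) * x 10, 1 * x 19, (1/2) * x 3 + (1/2) * x 4, (-1) * x 0 + (-1/2) * x 6, (-1/2) * x 3 + (-1/2) * x 4 + 1 * x 18 + (-1) * x 19, (1/2) * x 8 + (1/2) * x 9, (-1/2) * x 8 + (-1/2) * x 9 + 1 * x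 24 + 1 * x 26 + 1 * x 28, (1/2) * x 8 + (1/2) * x 9 + (-1) * x 24 + 1 * x 25 + (-1) * x 26 + (-1) * x 28, 1 * x 9 + (-1) * x 10, (1/2) * x 8 + (1/2) * x 9 + (-1) * x 24, 1 * x 6, (-1) * x 28, (-4) * x 1]
theorem coeffs_0 (x : Fin 33 → ℝ) : coeffs x 0 = 1 * x 4 := rfl
theorem coeffs_1 (x : Fin 33 → ℝ) : coeffs x 1 = (1/2) * x 8 + (1/2) * x 9 + (-1) * x 10 := rfl
theorem coeffs_2 (x : Fin 33 → ℝ) : coeffs x 2 = (-4) * x 1 + 1 * x 8 + 1 * x 9 + (-1) * x 12 + 1 * x 13 := rfl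
theorem coeffs_3 (x : Fin 33 → ℝ) : coeffs x 3 = (-4) * x 1 + (-1) * x 3 + (-1) * x 4 + (-1) * x 12 := rfl
theorem coeffs_4 (x : Fin 33 → ℝ) : coeffs x 4 = 4 * x 1 + (-1) * x 2 + 1 * x 3 + (-3/4) * x 8 + (-1/4) * x 9 + (-1/2) * x 10 + 1 * x 12 + 1 * x 16 := rfl
theorem coeffs_5 (x : Fin 33 → ℝ) : coeffs x 5 = 1 * x 2 + 1 * x 4 + (3/4) * x 8 + (1/4) * x 9 + (1/2) * x 10 := rfl
theorem coeffs_6 (x : Fin 33 → ℝ) : coeffs x 6 = 1 * x 19 := rfl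
theorem coeffs_7 (x : Fin 33 → ℝ) : coeffs x 7 = (1/2) * x 3 + (1/2) * x 4 := rfl
theorem coeffs_8 (x : Fin 33 → ℝ) : coeffs x 8 = (-1) * x 0 + (-1/2) * x 6 := rfl
theorem coeffs_9 (x : Fin 33 → ℝ) : coeffs x 9 = (-1/2) * x 3 + (-1/2) * x 4 + 1 * x 18 + (-1) * x 19 := rfl
theorem coeffs_10 (x : Fin 33 → ℝ) : coeffs x 10 = (1/2) * x 8 + (1/2) * x 9 := rfl
theorem coeffs_11 (x : Fin 33 → ℝ) : coeffs x 11 = (-1/2) * x 8 + (-1/2) * x 9 + 1 * x 24 + 1 * x 26 + 1 * x 28 := rfl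
theorem coeffs_12 (x : Fin 33 → ℝ) : coeffs x 12 = (1/2) * x 8 + (1/2) * x 9 + (-1) * x 24 + 1 * x 25 + (-1) * x 26 + (-1) * x 28 := rfl
theorem coeffs_13 (x : Fin 33 → ℝ) : coeffs x 13 = 1 * x 9 + (-1) * x 10 := rfl
theorem coeffs_14 (x : Fin 33 → ℝ) : coeffs x 14 = (1/2) * x 8 + (1/2) * x 9 + (-1) * x 24 := rfl
theorem coeffs_15 (x : Fin 33 → ℝ) : coeffs x 15 = 1 * x 6 := rfl
theorem coeffs_16 (x : Fin 33 → ℝ) : coeffs x 16 = (-1) * x 28 := rfl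
theorem coeffs_17 (x : Fin 33 → ℝ) : coeffs x 17 = (-4) * x 1 := rfl
theorem gmem_0 : gaugeEqs (vFam 0) := by
  unfold gaugeEqs
  norm_num [vf_0_0, vf_0_1, vf_0_2, vf_0_3, vf_0_4, vf_0_5, vf_0_6, vf_0_7, vf_0_8, vf_0_9, vf_0_10, vf_0_11, vf_0_12, vf_0_13, vf_0_14, vf_0_15, vf_0_16, vf_0_17, vf_0_18, vf_0_19, vf_0_20, vf_0_21, vf_0_22, vf_0_23, vf_0_24, vf_0_25, vf_0_26, vf_0_27, vf_0_28, vf_0_29, vf_0_30, vf_0_31, vf_0_32]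
theorem gmem_1 : gaugeEqs (vFam 1) := by
  unfold gaugeEqs
  norm_num [vf_1_0, vf_1_1, vf_1_2, vf_1_3, vf_1_4, vf_1_5, vf_1_6, vf_1_7, vf_1_8, vf_1_9, vf_1_10, vf_1_11, vf_1_12, vf_1_13, vf_1_14, vf_1_15, vf_1_16, vf_1_17, vf_1_18, vf_1_19, vf_1_20, vf_1_21, vf_1_22, vf_1_23, vf_1_24, vf_1_25, vf_1_26, vf_1_27, vf_1_28, vf_1_29, vf_1_30, vf_1_31, vf_1_32]
theorem gmem_2 : gaugeEqs (vFam 2) := by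
  unfold gaugeEqs
  norm_num [vf_2_0, vf_2_1, vf_2_2, vf_2_3, vf_2_4, vf_2_5, vf_2_6, vf_2_7, vf_2_8, vf_2_9, vf_2_10, vf_2_11, vf_2_12, vf_2_13, vf_2_14, vf_2_15, vf_2_16, vf_2_17, vf_2_18, vf_2_19, vf_2_20, vf_2_21, vf_2_22, vf_2_23, vf_2_24, vf_2_25, vf_2_26, vf_2_27, vf_2_28, vf_2_29, vf_2_30, vf_2_31, vf_2_32]
theorem gmem_3 : gaugeEqs (vFam 3) := by
  unfold gaugeEqs
  norm_num [vf_3_0, vf_3_1, vf_3_2, vf_3_3, vf_3_4, vf_3_5, vf_3_6, vf_3_7, vf_3_8, vf_3_9, vf_3_10, vf_3_11, vf_3_12, vf_3_13, vf_3_14, vf_3_15, vf_3_16, vf_3_17, vf_3_18, vf_3_19, vf_3_20, vf_3_21, vf_3_22, vf_3_23, vf_3_24, vf_3_25, vf_3_26, vf_3_27, vf_3_28, vf_3_29, vf_3_30, vf_3_31, vf_3_32]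
theorem gmem_4 : gaugeEqs (vFam 4) := by
  unfold gaugeEqs
  norm_num [vf_4_0, vf_4_1, vf_4_2, vf_4_3, vf_4_4, vf_4_5, vf_4_6, vf_4_7, vf_4_8, vf_4_9, vf_4_10, vf_4_11, vf_4_12, vf_4_13, vf_4_14, vf_4_15, vf_4_16, vf_4_17, vf_4_18, vf_4_19, vf_4_20, vf_4_21, vf_4_22, vf_4_23, vf_4_24, vf_4_25, vf_4_26, vf_4_27, vf_4_28, vf_4_29, vf_4_30, vf_4_31, vf_4_32]
theorem gmem_5 : gaugeEqs (vFam 5) := by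
  unfold gaugeEqs
  norm_num [vf_5_0, vf_5_1, vf_5_2, vf_5_3, vf_5_4, vf_5_5, vf_5_6, vf_5_7, vf_5_8, vf_5_9, vf_5_10, vf_5_11, vf_5_12, vf_5_13, vf_5_14, vf_5_15, vf_5_16, vf_5_17, vf_5_18, vf_5_19, vf_5_20, vf_5_21, vf_5_22, vf_5_23, vf_5_24, vf_5_25, vf_5_26, vf_5_27, vf_5_28, vf_5_29, vf_5_30, vf_5_31, vf_5_32]
theorem gmem_6 : gaugeEqs (vFam 6) := by
  unfold gaugeEqs
  norm_num [vf_6_0, vf_6_1, vf_6_2, vf_6_3, vf_6_4, vf_6_5, vf_6_6, vf_6_7, vf_6_8, vf_6_9, vf_6_10, vf_6_11, vf_6_12, vf_6_13, vf_6_14, vf_6_15, vf_6_16, vf_6_17, vf_6_18, vf_6_19, vf_6_20, vf_6_21, vf_6_22, vf_6_23, vf_6_24, vf_6_25, vf_6_26, vf_6_27, vf_6_28, vf_6_29, vf_6_30, vf_6_31, vf_6_32]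
theorem gmem_7 : gaugeEqs (vFam 7) := by
  unfold gaugeEqs
  norm_num [vf_7_0, vf_7_1, vf_7_2, vf_7_3, vf_7_4, vf_7_5, vf_7_6, vf_7_7, vf_7_8, vf_7_9, vf_7_10, vf_7_11, vf_7_12, vf_7_13, vf_7_14, vf_7_15, vf_7_16, vf_7_17, vf_7_18, vf_7_19, vf_7_20, vf_7_21, vf_7_22, vf_7_23, vf_7_24, vf_7_25, vf_7_26, vf_7_27, vf_7_28, vf_7_29, vf_7_30, vf_7_31, vf_7_32]
theorem gmem_8 : gaugeEqs (vFam 8) := by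
  unfold gaugeEqs
  norm_num [vf_8_0, vf_8_1, vf_8_2, vf_8_3, vf_8_4, vf_8_5, vf_8_6, vf_8_7, vf_8_8, vf_8_9, vf_8_10, vf_8_11, vf_8_12, vf_8_13, vf_8_14, vf_8_15, vf_8_16, vf_8_17, vf_8_18, vf_8_19, vf_8_20, vf_8_21, vf_8_22, vf_8_23, vf_8_24, vf_8_25, vf_8_26, vf_8_27, vf_8_28, vf_8_29, vf_8_30, vf_8_31, vf_8_32]
theorem gmem_9 : gaugeEqs (vFam 9) := by
  unfold gaugeEqs
  norm_num [vf_9_0, vf_9_1, vf_9_2, vf_9_3, vf_9_4, vf_9_5, vf_9_6, vf_9_7, vf_9_8, vf_9_9, vf_9_10, vf_9_11, vf_9_12, vf_9_13, vf_9_14, vf_9_15, vf_9_16, vf_9_17, vf_9_18, vf_9_19, vf_9_20, vf_9_21, vf_9_22, vf_9_23, vf_9_24, vf_9_25, vf_9_26, vf_9_27, vf_9_28, vf_9_29, vf_9_30, vf_9_31, vf_9_32]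
theorem gmem_10 : gaugeEqs (vFam 10) := by
  unfold gaugeEqs
  norm_num [vf_10_0, vf_10_1, vf_10_2, vf_10_3, vf_10_4, vf_10_5, vf_10_6, vf_10_7, vf_10_8, vf_10_9, vf_10_10, vf_10_11, vf_10_12, vf_10_13, vf_10_14, vf_10_15, vf_10_16, vf_10_17, vf_10_18, vf_10_19, vf_10_20, vf_10_21, vf_10_22, vf_10_23, vf_10_24, vf_10_25, vf_10_26, vf_10_27, vf_10_28, vf_10_29, vf_10_30, vf_10_31, vf_10_32]
theorem gmem_11 : gaugeEqs (vFam 11) := by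
  unfold gaugeEqs
  norm_num [vf_11_0, vf_11_1, vf_11_2, vf_11_3, vf_11_4, vf_11_5, vf_11_6, vf_11_7, vf_11_8, vf_11_9, vf_11_10, vf_11_11, vf_11_12, vf_11_13, vf_11_14, vf_11_15, vf_11_16, vf_11_17, vf_11_18, vf_11_19, vf_11_20, vf_11_21, vf_11_22, vf_11_23, vf_11_24, vf_11_25, vf_11_26, vf_11_27, vf_11_28, vf_11_29, vf_11_30, vf_11_31, vf_11_32]
theorem gmem_12 : gaugeEqs (vFam 12) := by
  unfold gaugeEqs
  norm_num [vf_12_0, vf_12_1, vf_12_2, vf_12_3, vf_12_4, vf_12_5, vf_12_6, vf_12_7, vf_12_8, vf_12_9, vf_12_10, vf_12_11, vf_12_12, vf_12_13, vf_12_14, vf_12_15, vf_12_16, vf_12_17, vf_12_18, vf_12_19, vf_12_20, vf_12_21, vf_12_22, vf_12_23, vf_12_24, vf_12_25, vf_12_26, vf_12_27, vf_12_28, vf_12_29, vf_12_30, vf_12_31, vf_12_32]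
theorem gmem_13 : gaugeEqs (vFam 13) := by
  unfold gaugeEqs
  norm_num [vf_13_0, vf_13_1, vf_13_2, vf_13_3, vf_13_4, vf_13_5, vf_13_6, vf_13_7, vf_13_8, vf_13_9, vf_13_10, vf_13_11, vf_13_12, vf_13_13, vf_13_14, vf_13_15, vf_13_16, vf_13_17, vf_13_18, vf_13_19, vf_13_20, vf_13_21, vf_13_22, vf_13_23, vf_13_24, vf_13_25, vf_13_26, vf_13_27, vf_13_28, vf_13_29, vf_13_30, vf_13_31, vf_13_32]
theorem gmem_14 : gaugeEqs (vFam 14) := by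
  unfold gaugeEqs
  norm_num [vf_14_0, vf_14_1, vf_14_2, vf_14_3, vf_14_4, vf_14_5, vf_14_6, vf_14_7, vf_14_8, vf_14_9, vf_14_10, vf_14_11, vf_14_12, vf_14_13, vf_14_14, vf_14_15, vf_14_16, vf_14_17, vf_14_18, vf_14_19, vf_14_20, vf_14_21, vf_14_22, vf_14_23, vf_14_24, vf_14_25, vf_14_26, vf_14_27, vf_14_28, vf_14_29, vf_14_30, vf_14_31, vf_14_32]
theorem gmem_15 : gaugeEqs (vFam 15) := by
  unfold gaugeEqs
  norm_num [vf_15_0, vf_15_1, vf_15_2, vf_15_3, vf_15_4, vf_15_5, vf_15_6, vf_15_7, vf_15_8, vf_15_9, vf_15_10, vf_15_11, vf_15_12, vf_15_13, vf_15_14, vf_15_15, vf_15_16, vf_15_17, vf_15_18, vf_15_19, vf_15_20, vf_15_21, vf_15_22, vf_15_23, vf_15_24, vf_15_25, vf_15_26, vf_15_27, vf_15_28, vf_15_29, vf_15_30, vf_15_31, vf_15_32]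
theorem gmem_16 : gaugeEqs (vFam 16) := by
  unfold gaugeEqs
  norm_num [vf_16_0, vf_16_1, vf_16_2, vf_16_3, vf_16_4, vf_16_5, vf_16_6, vf_16_7, vf_16_8, vf_16_9, vf_16_10, vf_16_11, vf_16_12, vf_16_13, vf_16_14, vf_16_15, vf_16_16, vf_16_17, vf_16_18, vf_16_19, vf_16_20, vf_16_21, vf_16_22, vf_16_23, vf_16_24, vf_16_25, vf_16_26, vf_16_27, vf_16_28, vf_16_29, vf_16_30, vf_16_31, vf_16_32]
theorem gmem_17 : gaugeEqs (vFam 17) := by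
  unfold gaugeEqs
  norm_num [vf_17_0, vf_17_1, vf_17_2, vf_17_3, vf_17_4, vf_17_5, vf_17_6, vf_17_7, vf_17_8, vf_17_9, vf_17_10, vf_17_11, vf_17_12, vf_17_13, vf_17_14, vf_17_15, vf_17_16, vf_17_17, vf_17_18, vf_17_19, vf_17_20, vf_17_21, vf_17_22, vf_17_23, vf_17_24, vf_17_25, vf_17_26, vf_17_27, vf_17_28, vf_17_29, vf_17_30, vf_17_31, vf_17_32]

set_option maxHeartbeats 2000000 in
/-- The 18 vectors `v1,…,v17,v_EH` are linearly independent, each satisfies the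
15 gauge-invariance equations, and they form a basis of the solution space `V`
(i.e. their span is exactly `V`). -/
theorem basis_of_solution_space :
    LinearIndependent ℝ vFam ∧ (∀ i, gaugeEqs (vFam i)) ∧
      (Submodule.span ℝ (Set.range vFam) : Set (Fin 33 → ℝ)) = {x | gaugeEqs x} := by
  refine ⟨?_, ?_, ?_⟩
  · rw [Fintype.linearIndependent_iff]
    intro c hc
    have p0 := congrFun hc (0 : Fin 33)
    simp only [sum_apply18, Pi.zero_apply, vf_0_0, vf_1_0, vf_2_0, vf_3_0, vf_4_0, vf_5_0, vf_6_0, vf_7_0, vf_8_0, vf_9_0, vf_10_0, vf_11_0, vf_12_0, vf_13_0, vf_14_0, vf_15_0, vf_16_0, vf_17_0] at p0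
    have p1 := congrFun hc (1 : Fin 33)
    simp only [sum_apply18, Pi.zero_apply, vf_0_1, vf_1_1, vf_2_1, vf_3_1, vf_4_1, vf_5_1, vf_6_1, vf_7_1, vf_8_1, vf_9_1, vf_10_1, vf_11_1, vf_12_1, vf_13_1, vf_14_1, vf_15_1, vf_16_1, vf_17_1] at p1
    have p2 := congrFun hc (2 : Fin 33)
    simp only [sum_apply18, Pi.zero_apply, vf_0_2, vf_1_2, vf_2_2, vf_3_2, vf_4_2, vf_5_2, vf_6_2, vf_7_2, vf_8_2, vf_9_2, vf_10_2, vf_11_2, vf_12_2, vf_13_2, vf_14_2, vf_15_2, vf_16_2, vf_17_2] at p2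
    have p3 := congrFun hc (3 : Fin 33)
    simp only [sum_apply18, Pi.zero_apply, vf_0_3, vf_1_3, vf_2_3, vf_3_3, vf_4_3, vf_5_3, vf_6_3, vf_7_3, vf_8_3, vf_9_3, vf_10_3, vf_11_3, vf_12_3, vf_13_3, vf_14_3, vf_15_3, vf_16_3, vf_17_3] at p3
    have p4 := congrFun hc (4 : Fin 33)
    simp only [sum_apply18, Pi.zero_apply, vf_0_4, vf_1_4, vf_2_4, vf_3_4, vf_4_4, vf_5_4, vf_6_4, vf_7_4, vf_8_4, vf_9_4, vf_10_4, vf_11_4, vf_12_4, vf_13_4, vf_14_4, vf_15_4, vf_16_4, vf_17_4] at p4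
    have p5 := congrFun hc (6 : Fin 33)
    simp only [sum_apply18, Pi.zero_apply, vf_0_6, vf_1_6, vf_2_6, vf_3_6, vf_4_6, vf_5_6, vf_6_6, vf_7_6, vf_8_6, vf_9_6, vf_10_6, vf_11_6, vf_12_6, vf_13_6, vf_14_6, vf_15_6, vf_16_6, vf_17_6] at p5
    have p6 := congrFun hc (8 : Fin 33)
    simp only [sum_apply18, Pi.zero_apply, vf_0_8, vf_1_8, vf_2_8, vf_3_8, vf_4_8, vf_5_8, vf_6_8, vf_7_8, vf_8_8, vf_9_8, vf_10_8, vf_11_8, vf_12_8, vf_13_8, vf_14_8, vf_15_8, vf_16_8, vf_17_8] at p6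
    have p7 := congrFun hc (9 : Fin 33)
    simp only [sum_apply18, Pi.zero_apply, vf_0_9, vf_1_9, vf_2_9, vf_3_9, vf_4_9, vf_5_9, vf_6_9, vf_7_9, vf_8_9, vf_9_9, vf_10_9, vf_11_9, vf_12_9, vf_13_9, vf_14_9, vf_15_9, vf_16_9, vf_17_9] at p7
    have p8 := congrFun hc (10 : Fin 33)
    simp only [sum_apply18, Pi.zero_apply, vf_0_10, vf_1_10, vf_2_10, vf_3_10, vf_4_10, vf_5_10, vf_6_10, vf_7_10, vf_8_10, vf_9_10, vf_10_10, vf_11_10, vf_12_10, vf_13_10, vf_14_10, vf_15_10, vf_16_10, vf_17_10] at p8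
    have p9 := congrFun hc (12 : Fin 33)
    simp only [sum_apply18, Pi.zero_apply, vf_0_12, vf_1_12, vf_2_12, vf_3_12, vf_4_12, vf_5_12, vf_6_12, vf_7_12, vf_8_12, vf_9_12, vf_10_12, vf_11_12, vf_12_12, vf_13_12, vf_14_12, vf_15_12, vf_16_12, vf_17_12] at p9
    have p10 := congrFun hc (13 : Fin 33)
    simp only [sum_apply18, Pi.zero_apply, vf_0_13, vf_1_13, vf_2_13, vf_3_13, vf_4_13, vf_5_13, vf_6_13, vf_7_13, vf_8_13, vf_9_13, vf_10_13, vf_11_13, vf_12_13, vf_13_13, vf_14_13, vf_15_13, vf_16_13, vf_17_13] at p10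
    have p11 := congrFun hc (16 : Fin 33)
    simp only [sum_apply18, Pi.zero_apply, vf_0_16, vf_1_16, vf_2_16, vf_3_16, vf_4_16, vf_5_16, vf_6_16, vf_7_16, vf_8_16, vf_9_16, vf_10_16, vf_11_16, vf_12_16, vf_13_16, vf_14_16, vf_15_16, vf_16_16, vf_17_16] at p11
    have p12 := congrFun hc (18 : Fin 33)
    simp only [sum_apply18, Pi.zero_apply, vf_0_18, vf_1_18, vf_2_18, vf_3_18, vf_4_18, vf_5_18, vf_6_18, vf_7_18, vf_8_18, vf_9_18, vf_10_18, vf_11_18, vf_12_18, vf_13_18, vf_14_18, vf_15_18, vf_16_18, vf_17_18] at p12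
    have p13 := congrFun hc (19 : Fin 33)
    simp only [sum_apply18, Pi.zero_apply, vf_0_19, vf_1_19, vf_2_19, vf_3_19, vf_4_19, vf_5_19, vf_6_19, vf_7_19, vf_8_19, vf_9_19, vf_10_19, vf_11_19, vf_12_19, vf_13_19, vf_14_19, vf_15_19, vf_16_19, vf_17_19] at p13
    have p14 := congrFun hc (24 : Fin 33)
    simp only [sum_apply18, Pi.zero_apply, vf_0_24, vf_1_24, vf_2_24, vf_3_24, vf_4_24, vf_5_24, vf_6_24, vf_7_24, vf_8_24, vf_9_24, vf_10_24, vf_11_24, vf_12_24, vf_13_24, vf_14_24, vf_15_24, vf_16_24, vf_17_24] at p14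
    have p15 := congrFun hc (25 : Fin 33)
    simp only [sum_apply18, Pi.zero_apply, vf_0_25, vf_1_25, vf_2_25, vf_3_25, vf_4_25, vf_5_25, vf_6_25, vf_7_25, vf_8_25, vf_9_25, vf_10_25, vf_11_25, vf_12_25, vf_13_25, vf_14_25, vf_15_25, vf_16_25, vf_17_25] at p15
    have p16 := congrFun hc (26 : Fin 33)
    simp only [sum_apply18, Pi.zero_apply, vf_0_26, vf_1_26, vf_2_26, vf_3_26, vf_4_26, vf_5_26, vf_6_26, vf_7_26, vf_8_26, vf_9_26, vf_10_26, vf_11_26, vf_12_26, vf_13_26, vf_14_26, vf_15_26, vf_16_26, vf_17_26] at p16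
    have p17 := congrFun hc (28 : Fin 33)
    simp only [sum_apply18, Pi.zero_apply, vf_0_28, vf_1_28, vf_2_28, vf_3_28, vf_4_28, vf_5_28, vf_6_28, vf_7_28, vf_8_28, vf_9_28, vf_10_28, vf_11_28, vf_12_28, vf_13_28, vf_14_28, vf_15_28, vf_16_28, vf_17_28] at p17
    have q0 : c 0 = 0 := by linear_combination 1 * p4
    have q1 : c 1 = 0 := by linear_combination (1/2) * p6 + (1/2) * p7 + (-1) * p8
    have q2 : c 2 = 0 := by linear_combination (-4) * p1 + 1 * p6 + 1 * p7 + (-1) * p9 + 1 * p10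
    have q3 : c 3 = 0 := by linear_combination (-4) * p1 + (-1) * p3 + (-1) * p4 + (-1) * p9
    have q4 : c 4 = 0 := by linear_combination 4 * p1 + (-1) * p2 + 1 * p3 + (-3/4) * p6 + (-1/4) * p7 + (-1/2) * p8 + 1 * p9 + 1 * p11
    have q5 : c 5 = 0 := by linear_combination 1 * p2 + 1 * p4 + (3/4) * p6 + (1/4) * p7 + (1/2) * p8
    have q6 : c 6 = 0 := by linear_combination 1 * p13
    have q7 : c 7 = 0 := by linear_combination (1/2) * p3 + (1/2) * p4
    have q8 : c 8 = 0 := by linear_combination (-1) * p0 + (-1/2) * p5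
    have q9 : c 9 = 0 := by linear_combination (-1/2) * p3 + (-1/2) * p4 + 1 * p12 + (-1) * p13
    have q10 : c 10 = 0 := by linear_combination (1/2) * p6 + (1/2) * p7
    have q11 : c 11 = 0 := by linear_combination (-1/2) * p6 + (-1/2) * p7 + 1 * p14 + 1 * p16 + 1 * p17
    have q12 : c 12 = 0 := by linear_combination (1/2) * p6 + (1/2) * p7 + (-1) * p14 + 1 * p15 + (-1) * p16 + (-1) * p17
    have q13 : c 13 = 0 := by linear_combination 1 * p7 + (-1) * p8
    have q14 : c 14 = 0 := by linear_combination (1/2) * p6 + (1/2) * p7 + (-1) * p14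
    have q15 : c 15 = 0 := by linear_combination 1 * p5
    have q16 : c 16 = 0 := by linear_combination (-1) * p17
    have q17 : c 17 = 0 := by linear_combination (-4) * p1
    intro i; fin_cases i
    exacts [q0, q1, q2, q3, q4, q5, q6, q7, q8, q9, q10, q11, q12, q13, q14, q15, q16, q17]
  · intro i; fin_cases i
    exacts [gmem_0, gmem_1, gmem_2, gmem_3, gmem_4, gmem_5, gmem_6, gmem_7, gmem_8, gmem_9, gmem_10, gmem_11, gmem_12, gmem_13, gmem_14, gmem_15, gmem_16, gmem_17]
  · apply Set.Subset.antisymm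
    · rintro x hx
      obtain ⟨c, rfl⟩ := (Submodule.mem_span_range_iff_exists_fun ℝ).mp hx
      refine ⟨?_, ?_, ?_, ?_, ?_, ?_, ?_, ?_, ?_, ?_, ?_, ?_, ?_, ?_, ?_⟩ <;>
        · simp only [sum_apply18, vf_0_0, vf_0_1, vf_0_2, vf_0_3, vf_0_4, vf_0_5, vf_0_6, vf_0_7, vf_0_8, vf_0_9, vf_0_10, vf_0_11, vf_0_12, vf_0_13, vf_0_14, vf_0_15, vf_0_16, vf_0_17, vf_0_18, vf_0_19, vf_0_20, vf_0_21, vf_0_22, vf_0_23, vf_0_24, vf_0_25, vf_0_26, vf_0_27, vf_0_28, vf_0_29, vf_0_30, vf_0_31, vf_0_32, vf_1_0, vf_1_1, vf_1_2, vf_1_3, vf_1_4, vf_1_5, vf_1_6, vf_1_7, vf_1_8, vf_1_9, vf_1_10, vf_1_11, vf_1_12, vf_1_13, vf_1_14, vf_1_15, vf_1_16, vf_1_17, vf_1_18, vf_1_19, vf_1_20, vf_1_21, vf_1_22, vf_1_23, vf_1_24, vf_1_25, vf_1_26, vf_1_27, vf_1_28, vf_1_29, vf_1_30, vf_1_31,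 vf_1_32, vf_2_0, vf_2_1, vf_2_2, vf_2_3, vf_2_4, vf_2_5, vf_2_6, vf_2_7, vf_2_8, vf_2_9, vf_2_10, vf_2_11, vf_2_12, vf_2_13, vf_2_14, vf_2_15, vf_2_16, vf_2_17, vf_2_18, vf_2_19, vf_2_20, vf_2_21, vf_2_22, vf_2_23, vf_2_24, vf_2_25, vf_2_26, vf_2_27, vf_2_28, vf_2_29, vf_2_30, vf_2_31, vf_2_32, vf_3_0, vf_3_1, vf_3_2, vf_3_3, vf_3_4, vf_3_5, vf_3_6, vf_3_7, vf_3_8, vf_3_9, vf_3_10, vf_3_11, vf_3_12, vf_3_13, vf_3_14, vf_3_15, vf_3_16, vf_3_17, vf_3_18, vf_3_19, vf_3_20, vf_3_21, vf_3_22, vf_3_23, vf_3_24, vf_3_25, vf_3_26, vf_3_27, vf_3_28, vf_3_29, vf_3_30, vf_3_31, vf_3_32, vf_4_0, vf_4_1, vf_4_2, vf_4_3, vf_4_4, vf_4_5, vf_4_6, vf_4_7, vf_4_8, vf_4_9, vf_4_10, vf_4_11, vf_4_12, vf_4_13, vf_4_14, vf_4_15, vf_4_16, vf_4_17, vf_4_18,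 vf_4_19, vf_4_20, vf_4_21, vf_4_22, vf_4_23, vf_4_24, vf_4_25, vf_4_26, vf_4_27, vf_4_28, vf_4_29, vf_4_30, vf_4_31, vf_4_32, vf_5_0, vf_5_1, vf_5_2, vf_5_3, vf_5_4, vf_5_5, vf_5_6, vf_5_7, vf_5_8, vf_5_9, vf_5_10, vf_5_11, vf_5_12, vf_5_13, vf_5_14, vf_5_15, vf_5_16, vf_5_17, vf_5_18, vf_5_19, vf_5_20, vf_5_21, vf_5_22, vf_5_23, vf_5_24, vf_5_25, vf_5_26, vf_5_27, vf_5_28, vf_5_29, vf_5_30, vf_5_31, vf_5_32, vf_6_0, vf_6_1, vf_6_2, vf_6_3, vf_6_4, vf_6_5, vf_6_6, vf_6_7, vf_6_8, vf_6_9, vf_6_10, vf_6_11, vf_6_12, vf_6_13, vf_6_14, vf_6_15, vf_6_16, vf_6_17, vf_6_18, vf_6_19, vf_6_20, vf_6_21, vf_6_22, vf_6_23, vf_6_24, vf_6_25, vf_6_26, vf_6_27, vf_6_28, vf_6_29, vf_6_30, vf_6_31, vf_6_32, vf_7_0, vf_7_1, vf_7_2, vf_7_3, vf_7_4, vf_7_5,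 vf_7_6, vf_7_7, vf_7_8, vf_7_9, vf_7_10, vf_7_11, vf_7_12, vf_7_13, vf_7_14, vf_7_15, vf_7_16, vf_7_17, vf_7_18, vf_7_19, vf_7_20, vf_7_21, vf_7_22, vf_7_23, vf_7_24, vf_7_25, vf_7_26, vf_7_27, vf_7_28, vf_7_29, vf_7_30, vf_7_31, vf_7_32, vf_8_0, vf_8_1, vf_8_2, vf_8_3, vf_8_4, vf_8_5, vf_8_6, vf_8_7, vf_8_8, vf_8_9, vf_8_10, vf_8_11, vf_8_12, vf_8_13, vf_8_14, vf_8_15, vf_8_16, vf_8_17, vf_8_18, vf_8_19, vf_8_20, vf_8_21, vf_8_22, vf_8_23, vf_8_24, vf_8_25, vf_8_26, vf_8_27, vf_8_28, vf_8_29, vf_8_30, vf_8_31, vf_8_32, vf_9_0, vf_9_1, vf_9_2, vf_9_3, vf_9_4, vf_9_5, vf_9_6, vf_9_7, vf_9_8, vf_9_9, vf_9_10, vf_9_11, vf_9_12, vf_9_13, vf_9_14, vf_9_15, vf_9_16, vf_9_17, vf_9_18, vf_9_19, vf_9_20, vf_9_21, vf_9_22, vf_9_23, vf_9_24, vf_9_25,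 vf_9_26, vf_9_27, vf_9_28, vf_9_29, vf_9_30, vf_9_31, vf_9_32, vf_10_0, vf_10_1, vf_10_2, vf_10_3, vf_10_4, vf_10_5, vf_10_6, vf_10_7, vf_10_8, vf_10_9, vf_10_10, vf_10_11, vf_10_12, vf_10_13, vf_10_14, vf_10_15, vf_10_16, vf_10_17, vf_10_18, vf_10_19, vf_10_20, vf_10_21, vf_10_22, vf_10_23, vf_10_24, vf_10_25, vf_10_26, vf_10_27, vf_10_28, vf_10_29, vf_10_30, vf_10_31, vf_10_32, vf_11_0, vf_11_1, vf_11_2, vf_11_3, vf_11_4, vf_11_5, vf_11_6, vf_11_7, vf_11_8, vf_11_9, vf_11_10, vf_11_11, vf_11_12, vf_11_13, vf_11_14, vf_11_15, vf_11_16, vf_11_17, vf_11_18, vf_11_19, vf_11_20, vf_11_21, vf_11_22, vf_11_23, vf_11_24, vf_11_25, vf_11_26, vf_11_27, vf_11_28, vf_11_29, vf_11_30, vf_11_31, vf_11_32, vf_12_0, vf_12_1, vf_12_2, vf_12_3, vf_12_4, vf_12_5, vf_12_6, vf_12_7, vf_12_8, vf_12_9, vf_12_10, vf_12_11, vf_12_12,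 vf_12_13, vf_12_14, vf_12_15, vf_12_16, vf_12_17, vf_12_18, vf_12_19, vf_12_20, vf_12_21, vf_12_22, vf_12_23, vf_12_24, vf_12_25, vf_12_26, vf_12_27, vf_12_28, vf_12_29, vf_12_30, vf_12_31, vf_12_32, vf_13_0, vf_13_1, vf_13_2, vf_13_3, vf_13_4, vf_13_5, vf_13_6, vf_13_7, vf_13_8, vf_13_9, vf_13_10, vf_13_11, vf_13_12, vf_13_13, vf_13_14, vf_13_15, vf_13_16, vf_13_17, vf_13_18, vf_13_19, vf_13_20, vf_13_21, vf_13_22, vf_13_23, vf_13_24, vf_13_25, vf_13_26, vf_13_27, vf_13_28, vf_13_29, vf_13_30, vf_13_31, vf_13_32, vf_14_0, vf_14_1, vf_14_2, vf_14_3, vf_14_4, vf_14_5, vf_14_6, vf_14_7, vf_14_8, vf_14_9, vf_14_10, vf_14_11, vf_14_12, vf_14_13, vf_14_14, vf_14_15, vf_14_16, vf_14_17, vf_14_18, vf_14_19, vf_14_20, vf_14_21, vf_14_22, vf_14_23, vf_14_24, vf_14_25, vf_14_26, vf_14_27, vf_14_28, vf_14_29, vf_14_30, vf_14_31, vf_14_32,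 vf_15_0, vf_15_1, vf_15_2, vf_15_3, vf_15_4, vf_15_5, vf_15_6, vf_15_7, vf_15_8, vf_15_9, vf_15_10, vf_15_11, vf_15_12, vf_15_13, vf_15_14, vf_15_15, vf_15_16, vf_15_17, vf_15_18, vf_15_19, vf_15_20, vf_15_21, vf_15_22, vf_15_23, vf_15_24, vf_15_25, vf_15_26, vf_15_27, vf_15_28, vf_15_29, vf_15_30, vf_15_31, vf_15_32, vf_16_0, vf_16_1, vf_16_2, vf_16_3, vf_16_4, vf_16_5, vf_16_6, vf_16_7, vf_16_8, vf_16_9, vf_16_10, vf_16_11, vf_16_12, vf_16_13, vf_16_14, vf_16_15, vf_16_16, vf_16_17, vf_16_18, vf_16_19, vf_16_20, vf_16_21, vf_16_22, vf_16_23, vf_16_24, vf_16_25, vf_16_26, vf_16_27, vf_16_28, vf_16_29, vf_16_30, vf_16_31, vf_16_32, vf_17_0, vf_17_1, vf_17_2, vf_17_3, vf_17_4, vf_17_5, vf_17_6, vf_17_7, vf_17_8, vf_17_9, vf_17_10, vf_17_11, vf_17_12, vf_17_13, vf_17_14, vf_17_15, vf_17_16, vf_17_17, vf_17_18, vf_17_19,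 vf_17_20, vf_17_21, vf_17_22, vf_17_23, vf_17_24, vf_17_25, vf_17_26, vf_17_27, vf_17_28, vf_17_29, vf_17_30, vf_17_31, vf_17_32]
          ring
    · rintro x ⟨h1, h2, h3, h4, h5, h6, h7, h8, h9, h10, h11, h12, h13, h14, h15⟩
      refine (Submodule.mem_span_range_iff_exists_fun ℝ).mpr ⟨coeffs x, ?_⟩
      have kh0 : (∑ i, coeffs x i • vFam i) 0 = x 0 := by
        rw [sum_apply18]
        simp only [coeffs_0, coeffs_1, coeffs_2, coeffs_3, coeffs_4, coeffs_5, coeffs_6, coeffs_7, coeffs_8, coeffs_9, coeffs_10, coeffs_11, coeffs_12, coeffs_13, coeffs_14, coeffs_15, coeffs_16, coeffs_17, vf_0_0, vf_1_0, vf_2_0, vf_3_0, vf_4_0, vf_5_0, vf_6_0, vf_7_0, vf_8_0, vf_9_0, vf_10_0, vf_11_0, vf_12_0, vf_13_0, vf_14_0, vf_15_0, vf_16_0, vf_17_0]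
        linear_combination
      have kh1 : (∑ i, coeffs x i • vFam i) 1 = x 1 := by
        rw [sum_apply18]
        simp only [coeffs_0, coeffs_1, coeffs_2, coeffs_3, coeffs_4, coeffs_5, coeffs_6, coeffs_7, coeffs_8, coeffs_9, coeffs_10, coeffs_11, coeffs_12, coeffs_13, coeffs_14, coeffs_15, coeffs_16, coeffs_17, vf_0_1, vf_1_1, vf_2_1, vf_3_1, vf_4_1, vf_5_1, vf_6_1, vf_7_1, vf_8_1, vf_9_1, vf_10_1, vf_11_1, vf_12_1, vf_13_1, vf_14_1, vf_15_1, vf_16_1, vf_17_1]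
        linear_combination
      have kh2 : (∑ i, coeffs x i • vFam i) 2 = x 2 := by
        rw [sum_apply18]
        simp only [coeffs_0, coeffs_1, coeffs_2, coeffs_3, coeffs_4, coeffs_5, coeffs_6, coeffs_7, coeffs_8, coeffs_9, coeffs_10, coeffs_11, coeffs_12, coeffs_13, coeffs_14, coeffs_15, coeffs_16, coeffs_17, vf_0_2, vf_1_2, vf_2_2, vf_3_2, vf_4_2, vf_5_2, vf_6_2, vf_7_2, vf_8_2, vf_9_2, vf_10_2, vf_11_2, vf_12_2, vf_13_2, vf_14_2, vf_15_2, vf_16_2, vf_17_2]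
        linear_combination
      have kh3 : (∑ i, coeffs x i • vFam i) 3 = x 3 := by
        rw [sum_apply18]
        simp only [coeffs_0, coeffs_1, coeffs_2, coeffs_3, coeffs_4, coeffs_5, coeffs_6, coeffs_7, coeffs_8, coeffs_9, coeffs_10, coeffs_11, coeffs_12, coeffs_13, coeffs_14, coeffs_15, coeffs_16, coeffs_17, vf_0_3, vf_1_3, vf_2_3, vf_3_3, vf_4_3, vf_5_3, vf_6_3, vf_7_3, vf_8_3, vf_9_3, vf_10_3, vf_11_3, vf_12_3, vf_13_3, vf_14_3, vf_15_3, vf_16_3, vf_17_3]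
        linear_combination
      have kh4 : (∑ i, coeffs x i • vFam i) 4 = x 4 := by
        rw [sum_apply18]
        simp only [coeffs_0, coeffs_1, coeffs_2, coeffs_3, coeffs_4, coeffs_5, coeffs_6, coeffs_7, coeffs_8, coeffs_9, coeffs_10, coeffs_11, coeffs_12, coeffs_13, coeffs_14, coeffs_15, coeffs_16, coeffs_17, vf_0_4, vf_1_4, vf_2_4, vf_3_4, vf_4_4, vf_5_4, vf_6_4, vf_7_4, vf_8_4, vf_9_4, vf_10_4, vf_11_4, vf_12_4, vf_13_4, vf_14_4, vf_15_4, vf_16_4, vf_17_4]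
        linear_combination
      have kh5 : (∑ i, coeffs x i • vFam i) 5 = x 5 := by
        rw [sum_apply18]
        simp only [coeffs_0, coeffs_1, coeffs_2, coeffs_3, coeffs_4, coeffs_5, coeffs_6, coeffs_7, coeffs_8, coeffs_9, coeffs_10, coeffs_11, coeffs_12, coeffs_13, coeffs_14, coeffs_15, coeffs_16, coeffs_17, vf_0_5, vf_1_5, vf_2_5, vf_3_5, vf_4_5, vf_5_5, vf_6_5, vf_7_5, vf_8_5, vf_9_5, vf_10_5, vf_11_5, vf_12_5, vf_13_5, vf_14_5, vf_15_5, vf_16_5, vf_17_5]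
        linear_combination 1 * h9
      have kh6 : (∑ i, coeffs x i • vFam i) 6 = x 6 := by
        rw [sum_apply18]
        simp only [coeffs_0, coeffs_1, coeffs_2, coeffs_3, coeffs_4, coeffs_5, coeffs_6, coeffs_7, coeffs_8, coeffs_9, coeffs_10, coeffs_11, coeffs_12, coeffs_13, coeffs_14, coeffs_15, coeffs_16, coeffs_17, vf_0_6, vf_1_6, vf_2_6, vf_3_6, vf_4_6, vf_5_6, vf_6_6, vf_7_6, vf_8_6, vf_9_6, vf_10_6, vf_11_6, vf_12_6, vf_13_6, vf_14_6, vf_15_6, vf_16_6, vf_17_6]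
        linear_combination
      have kh7 : (∑ i, coeffs x i • vFam i) 7 = x 7 := by
        rw [sum_apply18]
        simp only [coeffs_0, coeffs_1, coeffs_2, coeffs_3, coeffs_4, coeffs_5, coeffs_6, coeffs_7, coeffs_8, coeffs_9, coeffs_10, coeffs_11, coeffs_12, coeffs_13, coeffs_14, coeffs_15, coeffs_16, coeffs_17, vf_0_7, vf_1_7, vf_2_7, vf_3_7, vf_4_7, vf_5_7, vf_6_7, vf_7_7, vf_8_7, vf_9_7, vf_10_7, vf_11_7, vf_12_7, vf_13_7, vf_14_7, vf_15_7, vf_16_7, vf_17_7]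
        linear_combination (1/2) * h11 + (1/2) * h15
      have kh8 : (∑ i, coeffs x i • vFam i) 8 = x 8 := by
        rw [sum_apply18]
        simp only [coeffs_0, coeffs_1, coeffs_2, coeffs_3, coeffs_4, coeffs_5, coeffs_6, coeffs_7, coeffs_8, coeffs_9, coeffs_10, coeffs_11, coeffs_12, coeffs_13, coeffs_14, coeffs_15, coeffs_16, coeffs_17, vf_0_8, vf_1_8, vf_2_8, vf_3_8, vf_4_8, vf_5_8, vf_6_8, vf_7_8, vf_8_8, vf_9_8, vf_10_8, vf_11_8, vf_12_8, vf_13_8, vf_14_8, vf_15_8, vf_16_8, vf_17_8]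
        linear_combination
      have kh9 : (∑ i, coeffs x i • vFam i) 9 = x 9 := by
        rw [sum_apply18]
        simp only [coeffs_0, coeffs_1, coeffs_2, coeffs_3, coeffs_4, coeffs_5, coeffs_6, coeffs_7, coeffs_8, coeffs_9, coeffs_10, coeffs_11, coeffs_12, coeffs_13, coeffs_14, coeffs_15, coeffs_16, coeffs_17, vf_0_9, vf_1_9, vf_2_9, vf_3_9, vf_4_9, vf_5_9, vf_6_9, vf_7_9, vf_8_9, vf_9_9, vf_10_9, vf_11_9, vf_12_9, vf_13_9, vf_14_9, vf_15_9, vf_16_9, vf_17_9]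
        linear_combination
      have kh10 : (∑ i, coeffs x i • vFam i) 10 = x 10 := by
        rw [sum_apply18]
        simp only [coeffs_0, coeffs_1, coeffs_2, coeffs_3, coeffs_4, coeffs_5, coeffs_6, coeffs_7, coeffs_8, coeffs_9, coeffs_10, coeffs_11, coeffs_12, coeffs_13, coeffs_14, coeffs_15, coeffs_16, coeffs_17, vf_0_10, vf_1_10, vf_2_10, vf_3_10, vf_4_10, vf_5_10, vf_6_10, vf_7_10, vf_8_10, vf_9_10, vf_10_10, vf_11_10, vf_12_10, vf_13_10, vf_14_10, vf_15_10, vf_16_10, vf_17_10]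
        linear_combination
      have kh11 : (∑ i, coeffs x i • vFam i) 11 = x 11 := by
        rw [sum_apply18]
        simp only [coeffs_0, coeffs_1, coeffs_2, coeffs_3, coeffs_4, coeffs_5, coeffs_6, coeffs_7, coeffs_8, coeffs_9, coeffs_10, coeffs_11, coeffs_12, coeffs_13, coeffs_14, coeffs_15, coeffs_16, coeffs_17, vf_0_11, vf_1_11, vf_2_11, vf_3_11, vf_4_11, vf_5_11, vf_6_11, vf_7_11, vf_8_11, vf_9_11, vf_10_11, vf_11_11, vf_12_11, vf_13_11, vf_14_11, vf_15_11, vf_16_11, vf_17_11]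
        linear_combination (-1) * h3 + 1 * h6 + 1 * h11 + 1 * h15
      have kh12 : (∑ i, coeffs x i • vFam i) 12 = x 12 := by
        rw [sum_apply18]
        simp only [coeffs_0, coeffs_1, coeffs_2, coeffs_3, coeffs_4, coeffs_5, coeffs_6, coeffs_7, coeffs_8, coeffs_9, coeffs_10, coeffs_11, coeffs_12, coeffs_13, coeffs_14, coeffs_15, coeffs_16, coeffs_17, vf_0_12, vf_1_12, vf_2_12, vf_3_12, vf_4_12, vf_5_12, vf_6_12, vf_7_12, vf_8_12, vf_9_12, vf_10_12, vf_11_12, vf_12_12, vf_13_12, vf_14_12, vf_15_12, vf_16_12, vf_17_12]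
        linear_combination
      have kh13 : (∑ i, coeffs x i • vFam i) 13 = x 13 := by
        rw [sum_apply18]
        simp only [coeffs_0, coeffs_1, coeffs_2, coeffs_3, coeffs_4, coeffs_5, coeffs_6, coeffs_7, coeffs_8, coeffs_9, coeffs_10, coeffs_11, coeffs_12, coeffs_13, coeffs_14, coeffs_15, coeffs_16, coeffs_17, vf_0_13, vf_1_13, vf_2_13, vf_3_13, vf_4_13, vf_5_13, vf_6_13, vf_7_13, vf_8_13, vf_9_13, vf_10_13, vf_11_13, vf_12_13, vf_13_13, vf_14_13, vf_15_13, vf_16_13, vf_17_13]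
        linear_combination
      have kh14 : (∑ i, coeffs x i • vFam i) 14 = x 14 := by
        rw [sum_apply18]
        simp only [coeffs_0, coeffs_1, coeffs_2, coeffs_3, coeffs_4, coeffs_5, coeffs_6, coeffs_7, coeffs_8, coeffs_9, coeffs_10, coeffs_11, coeffs_12, coeffs_13, coeffs_14, coeffs_15, coeffs_16, coeffs_17, vf_0_14, vf_1_14, vf_2_14, vf_3_14, vf_4_14, vf_5_14, vf_6_14, vf_7_14, vf_8_14, vf_9_14, vf_10_14, vf_11_14, vf_12_14, vf_13_14, vf_14_14, vf_15_14, vf_16_14, vf_17_14]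
        linear_combination (-1) * h7 + (-2) * h9 + 1 * h10
      have kh15 : (∑ i, coeffs x i • vFam i) 15 = x 15 := by
        rw [sum_apply18]
        simp only [coeffs_0, coeffs_1, coeffs_2, coeffs_3, coeffs_4, coeffs_5, coeffs_6, coeffs_7, coeffs_8, coeffs_9, coeffs_10, coeffs_11, coeffs_12, coeffs_13, coeffs_14, coeffs_15, coeffs_16, coeffs_17, vf_0_15, vf_1_15, vf_2_15, vf_3_15, vf_4_15, vf_5_15, vf_6_15, vf_7_15, vf_8_15, vf_9_15, vf_10_15, vf_11_15, vf_12_15, vf_13_15, vf_14_15, vf_15_15, vf_16_15, vf_17_15]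
        linear_combination (-2) * h9 + 1 * h10
      have kh16 : (∑ i, coeffs x i • vFam i) 16 = x 16 := by
        rw [sum_apply18]
        simp only [coeffs_0, coeffs_1, coeffs_2, coeffs_3, coeffs_4, coeffs_5, coeffs_6, coeffs_7, coeffs_8, coeffs_9, coeffs_10, coeffs_11, coeffs_12, coeffs_13, coeffs_14, coeffs_15, coeffs_16, coeffs_17, vf_0_16, vf_1_16, vf_2_16, vf_3_16, vf_4_16, vf_5_16, vf_6_16, vf_7_16, vf_8_16, vf_9_16, vf_10_16, vf_11_16, vf_12_16, vf_13_16, vf_14_16, vf_15_16, vf_16_16, vf_17_16]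
        linear_combination
      have kh17 : (∑ i, coeffs x i • vFam i) 17 = x 17 := by
        rw [sum_apply18]
        simp only [coeffs_0, coeffs_1, coeffs_2, coeffs_3, coeffs_4, coeffs_5, coeffs_6, coeffs_7, coeffs_8, coeffs_9, coeffs_10, coeffs_11, coeffs_12, coeffs_13, coeffs_14, coeffs_15, coeffs_16, coeffs_17, vf_0_17, vf_1_17, vf_2_17, vf_3_17, vf_4_17, vf_5_17, vf_6_17, vf_7_17, vf_8_17, vf_9_17, vf_10_17, vf_11_17, vf_12_17, vf_13_17, vf_14_17, vf_15_17, vf_16_17, vf_17_17]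
        linear_combination 1 * h3 + (-1) * h6 + (-1) * h7 + 1 * h8 + (-1) * h10 + (-1) * h11 + (-1) * h15
      have kh18 : (∑ i, coeffs x i • vFam i) 18 = x 18 := by
        rw [sum_apply18]
        simp only [coeffs_0, coeffs_1, coeffs_2, coeffs_3, coeffs_4, coeffs_5, coeffs_6, coeffs_7, coeffs_8, coeffs_9, coeffs_10, coeffs_11, coeffs_12, coeffs_13, coeffs_14, coeffs_15, coeffs_16, coeffs_17, vf_0_18, vf_1_18, vf_2_18, vf_3_18, vf_4_18, vf_5_18, vf_6_18, vf_7_18, vf_8_18, vf_9_18, vf_10_18, vf_11_18, vf_12_18, vf_13_18, vf_14_18, vf_15_18, vf_16_18, vf_17_18]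
        linear_combination
      have kh19 : (∑ i, coeffs x i • vFam i) 19 = x 19 := by
        rw [sum_apply18]
        simp only [coeffs_0, coeffs_1, coeffs_2, coeffs_3, coeffs_4, coeffs_5, coeffs_6, coeffs_7, coeffs_8, coeffs_9, coeffs_10, coeffs_11, coeffs_12, coeffs_13, coeffs_14, coeffs_15, coeffs_16, coeffs_17, vf_0_19, vf_1_19, vf_2_19, vf_3_19, vf_4_19, vf_5_19, vf_6_19, vf_7_19, vf_8_19, vf_9_19, vf_10_19, vf_11_19, vf_12_19, vf_13_19, vf_14_19, vf_15_19, vf_16_19, vf_17_19]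
        linear_combination
      have kh20 : (∑ i, coeffs x i • vFam i) 20 = x 20 := by
        rw [sum_apply18]
        simp only [coeffs_0, coeffs_1, coeffs_2, coeffs_3, coeffs_4, coeffs_5, coeffs_6, coeffs_7, coeffs_8, coeffs_9, coeffs_10, coeffs_11, coeffs_12, coeffs_13, coeffs_14, coeffs_15, coeffs_16, coeffs_17, vf_0_20, vf_1_20, vf_2_20, vf_3_20, vf_4_20, vf_5_20, vf_6_20, vf_7_20, vf_8_20, vf_9_20, vf_10_20, vf_11_20, vf_12_20, vf_13_20, vf_14_20, vf_15_20, vf_16_20, vf_17_20]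
        linear_combination 1 * h9 + 1 * h13 + (-1) * h14
      have kh21 : (∑ i, coeffs x i • vFam i) 21 = x 21 := by
        rw [sum_apply18]
        simp only [coeffs_0, coeffs_1, coeffs_2, coeffs_3, coeffs_4, coeffs_5, coeffs_6, coeffs_7, coeffs_8, coeffs_9, coeffs_10, coeffs_11, coeffs_12, coeffs_13, coeffs_14, coeffs_15, coeffs_16, coeffs_17, vf_0_21, vf_1_21, vf_2_21, vf_3_21, vf_4_21, vf_5_21, vf_6_21, vf_7_21, vf_8_21, vf_9_21, vf_10_21, vf_11_21, vf_12_21, vf_13_21, vf_14_21, vf_15_21, vf_16_21, vf_17_21]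
        linear_combination (1/2) * h12 + (-1) * h14 + (1/2) * h15
      have kh22 : (∑ i, coeffs x i • vFam i) 22 = x 22 := by
        rw [sum_apply18]
        simp only [coeffs_0, coeffs_1, coeffs_2, coeffs_3, coeffs_4, coeffs_5, coeffs_6, coeffs_7, coeffs_8, coeffs_9, coeffs_10, coeffs_11, coeffs_12, coeffs_13, coeffs_14, coeffs_15, coeffs_16, coeffs_17, vf_0_22, vf_1_22, vf_2_22, vf_3_22, vf_4_22, vf_5_22, vf_6_22, vf_7_22, vf_8_22, vf_9_22, vf_10_22, vf_11_22, vf_12_22, vf_13_22, vf_14_22, vf_15_22, vf_16_22, vf_17_22]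
        linear_combination (-1) * h9 + (-1/2) * h11 + (1/2) * h15
      have kh23 : (∑ i, coeffs x i • vFam i) 23 = x 23 := by
        rw [sum_apply18]
        simp only [coeffs_0, coeffs_1, coeffs_2, coeffs_3, coeffs_4, coeffs_5, coeffs_6, coeffs_7, coeffs_8, coeffs_9, coeffs_10, coeffs_11, coeffs_12, coeffs_13, coeffs_14, coeffs_15, coeffs_16, coeffs_17, vf_0_23, vf_1_23, vf_2_23, vf_3_23, vf_4_23, vf_5_23, vf_6_23, vf_7_23, vf_8_23, vf_9_23, vf_10_23, vf_11_23, vf_12_23, vf_13_23, vf_14_23, vf_15_23, vf_16_23, vf_17_23]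
        linear_combination (-2) * h9 + 1 * h14
      have kh24 : (∑ i, coeffs x i • vFam i) 24 = x 24 := by
        rw [sum_apply18]
        simp only [coeffs_0, coeffs_1, coeffs_2, coeffs_3, coeffs_4, coeffs_5, coeffs_6, coeffs_7, coeffs_8, coeffs_9, coeffs_10, coeffs_11, coeffs_12, coeffs_13, coeffs_14, coeffs_15, coeffs_16, coeffs_17, vf_0_24, vf_1_24, vf_2_24, vf_3_24, vf_4_24, vf_5_24, vf_6_24, vf_7_24, vf_8_24, vf_9_24, vf_10_24, vf_11_24, vf_12_24, vf_13_24, vf_14_24, vf_15_24, vf_16_24, vf_17_24]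
        linear_combination
      have kh25 : (∑ i, coeffs x i • vFam i) 25 = x 25 := by
        rw [sum_apply18]
        simp only [coeffs_0, coeffs_1, coeffs_2, coeffs_3, coeffs_4, coeffs_5, coeffs_6, coeffs_7, coeffs_8, coeffs_9, coeffs_10, coeffs_11, coeffs_12, coeffs_13, coeffs_14, coeffs_15, coeffs_16, coeffs_17, vf_0_25, vf_1_25, vf_2_25, vf_3_25, vf_4_25, vf_5_25, vf_6_25, vf_7_25, vf_8_25, vf_9_25, vf_10_25, vf_11_25, vf_12_25, vf_13_25, vf_14_25, vf_15_25, vf_16_25, vf_17_25]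
        linear_combination
      have kh26 : (∑ i, coeffs x i • vFam i) 26 = x 26 := by
        rw [sum_apply18]
        simp only [coeffs_0, coeffs_1, coeffs_2, coeffs_3, coeffs_4, coeffs_5, coeffs_6, coeffs_7, coeffs_8, coeffs_9, coeffs_10, coeffs_11, coeffs_12, coeffs_13, coeffs_14, coeffs_15, coeffs_16, coeffs_17, vf_0_26, vf_1_26, vf_2_26, vf_3_26, vf_4_26, vf_5_26, vf_6_26, vf_7_26, vf_8_26, vf_9_26, vf_10_26, vf_11_26, vf_12_26, vf_13_26, vf_14_26, vf_15_26, vf_16_26, vf_17_26]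
        linear_combination
      have kh27 : (∑ i, coeffs x i • vFam i) 27 = x 27 := by
        rw [sum_apply18]
        simp only [coeffs_0, coeffs_1, coeffs_2, coeffs_3, coeffs_4, coeffs_5, coeffs_6, coeffs_7, coeffs_8, coeffs_9, coeffs_10, coeffs_11, coeffs_12, coeffs_13, coeffs_14, coeffs_15, coeffs_16, coeffs_17, vf_0_27, vf_1_27, vf_2_27, vf_3_27, vf_4_27, vf_5_27, vf_6_27, vf_7_27, vf_8_27, vf_9_27, vf_10_27, vf_11_27, vf_12_27, vf_13_27, vf_14_27, vf_15_27, vf_16_27, vf_17_27]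
        linear_combination 1 * h1 + (-1) * h4
      have kh28 : (∑ i, coeffs x i • vFam i) 28 = x 28 := by
        rw [sum_apply18]
        simp only [coeffs_0, coeffs_1, coeffs_2, coeffs_3, coeffs_4, coeffs_5, coeffs_6, coeffs_7, coeffs_8, coeffs_9, coeffs_10, coeffs_11, coeffs_12, coeffs_13, coeffs_14, coeffs_15, coeffs_16, coeffs_17, vf_0_28, vf_1_28, vf_2_28, vf_3_28, vf_4_28, vf_5_28, vf_6_28, vf_7_28, vf_8_28, vf_9_28, vf_10_28, vf_11_28, vf_12_28, vf_13_28, vf_14_28, vf_15_28, vf_16_28, vf_17_28]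
        linear_combination
      have kh29 : (∑ i, coeffs x i • vFam i) 29 = x 29 := by
        rw [sum_apply18]
        simp only [coeffs_0, coeffs_1, coeffs_2, coeffs_3, coeffs_4, coeffs_5, coeffs_6, coeffs_7, coeffs_8, coeffs_9, coeffs_10, coeffs_11, coeffs_12, coeffs_13, coeffs_14, coeffs_15, coeffs_16, coeffs_17, vf_0_29, vf_1_29, vf_2_29, vf_3_29, vf_4_29, vf_5_29, vf_6_29, vf_7_29, vf_8_29, vf_9_29, vf_10_29, vf_11_29, vf_12_29, vf_13_29, vf_14_29, vf_15_29, vf_16_29, vf_17_29]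
        linear_combination (-1) * h3 + 1 * h4 + 1 * h6
      have kh30 : (∑ i, coeffs x i • vFam i) 30 = x 30 := by
        rw [sum_apply18]
        simp only [coeffs_0, coeffs_1, coeffs_2, coeffs_3, coeffs_4, coeffs_5, coeffs_6, coeffs_7, coeffs_8, coeffs_9, coeffs_10, coeffs_11, coeffs_12, coeffs_13, coeffs_14, coeffs_15, coeffs_16, coeffs_17, vf_0_30, vf_1_30, vf_2_30, vf_3_30, vf_4_30, vf_5_30, vf_6_30, vf_7_30, vf_8_30, vf_9_30, vf_10_30, vf_11_30, vf_12_30, vf_13_30, vf_14_30, vf_15_30, vf_16_30, vf_17_30]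
        linear_combination (-1) * h5 + 1 * h6 + 1 * h11 + 1 * h15
      have kh31 : (∑ i, coeffs x i • vFam i) 31 = x 31 := by
        rw [sum_apply18]
        simp only [coeffs_0, coeffs_1, coeffs_2, coeffs_3, coeffs_4, coeffs_5, coeffs_6, coeffs_7, coeffs_8, coeffs_9, coeffs_10, coeffs_11, coeffs_12, coeffs_13, coeffs_14, coeffs_15, coeffs_16, coeffs_17, vf_0_31, vf_1_31, vf_2_31, vf_3_31, vf_4_31, vf_5_31, vf_6_31, vf_7_31, vf_8_31, vf_9_31, vf_10_31, vf_11_31, vf_12_31, vf_13_31, vf_14_31, vf_15_31, vf_16_31, vf_17_31]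
        linear_combination (-1) * h2 + 1 * h4
      have kh32 : (∑ i, coeffs x i • vFam i) 32 = x 32 := by
        rw [sum_apply18]
        simp only [coeffs_0, coeffs_1, coeffs_2, coeffs_3, coeffs_4, coeffs_5, coeffs_6, coeffs_7, coeffs_8, coeffs_9, coeffs_10, coeffs_11, coeffs_12, coeffs_13, coeffs_14, coeffs_15, coeffs_16, coeffs_17, vf_0_32, vf_1_32, vf_2_32, vf_3_32, vf_4_32, vf_5_32, vf_6_32, vf_7_32, vf_8_32, vf_9_32, vf_10_32, vf_11_32, vf_12_32, vf_13_32, vf_14_32, vf_15_32, vf_16_32, vf_17_32]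
        linear_combination (-1) * h2 + 1 * h4 + 1 * h6
      funext k; fin_cases k
      exacts [kh0, kh1, kh2, kh3, kh4, kh5, kh6, kh7, kh8, kh9, kh10, kh11, kh12, kh13, kh14, kh15, kh16, kh17, kh18, kh19, kh20, kh21, kh22, kh23, kh24, kh25, kh26, kh27, kh28, kh29, kh30, kh31, kh32]
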